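/- arXiv:2207.09199 — 9 statements merged into one kernel-verified Lean document; each statement's English description precedes it below -/
import Mathlib

section
/- Let κ be a regular cardinal and γ ≤ κ a limit ordinal. If Cut has a winning strategy in the cut-and-choose game U(κ,γ), then κ ≤ 2^|γ|. -/
open Cardinal Set

universe u

/-
Proof idea: every point `x` of `κ` determines a branch of Cut's tree, obtained by always moving
to the successor whose label contains `x`; by induction `x` lies in every label along it.
If two points determine the same branch up to height `γ`, both lie in the intersection of its
labels, which Cut's winning strategy makes a subsingleton. So `x ↦ (branch of x)↾γ` injects
`κ` into `2 ^ γ`.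
-/

/-- A strategy for Cut in a binary cut-and-choose game, identified with a labeled
binary tree: `L f α` is the label at the node given by the branch `f` at level `α`. -/
def IsCutTree {K : Type u} (L : (Ordinal.{u} → Bool) → Ordinal.{u} → Set K) : Prop :=
  (∀ f g : Ordinal.{u} → Bool, ∀ α : Ordinal.{u}, (∀ β < α, f β = g β) → L f α = L g α) ∧
  (∀ f : Ordinal.{u} → Bool, L f 0 = Set.univ) ∧
  (∀ f g : Ordinal.{u} → Bool, ∀ α : Ordinal.{u}, (∀ β < α, f β = g β) → f α = true →
    g α = false →
      L f (α + 1) ∪ L g (α + 1) = L f α ∧ Disjoint (L f (α + 1)) (L g (α + 1))) ∧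
  (∀ f : Ordinal.{u} → Bool, ∀ α : Ordinal.{u}, Order.IsSuccLimit α → L f α = ⋂ β ∈ Set.Iio α, L f β)

open Classical in
/-- At level `α` the branch takes the value `true` iff `x` lies in the `true`-successor of the node
reached so far; the filler `true` beyond `α` is irrelevant, labels depending only on earlier values. -/
noncomputable def cutBranch {K : Type u} (L : (Ordinal.{u} → Bool) → Ordinal.{u} → Set K)
    (x : K) : Ordinal.{u} → Bool
  | α => decide (x ∈ L (fun β => if _h : β < α then cutBranch L x β else true) (α + 1))
termination_by α => α

namespace IsCutTree

variable {K : Type u} {L : (Ordinal.{u} → Bool) → Ordinal.{u} → Set K}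

theorem label_succ_congr (hL : IsCutTree L) {f g : Ordinal.{u} → Bool} {α : Ordinal.{u}}
    (hfg : ∀ β ≤ α, f β = g β) : L f (α + 1) = L g (α + 1) :=
  hL.1 f g _ fun β hβ => hfg β (Order.lt_succ_iff.mp hβ)

theorem mem_label_succ_or (hL : IsCutTree L) {f : Ordinal.{u} → Bool} {α : Ordinal.{u}}
    {x : K} (hx : x ∈ L f α) :
    x ∈ L (Function.update f α true) (α + 1) ∨ x ∈ L (Function.update f α false) (α + 1) := by
  have hbelow : ∀ b, ∀ β < α, Function.update f α b β = f β := fun b β hβ =>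
    Function.update_of_ne hβ.ne _ _
  obtain ⟨hunion, -⟩ := hL.2.2.1 _ _ α (fun β hβ => (hbelow true β hβ).trans (hbelow false β hβ).symm)
    (by simp) (by simp)
  rwa [← Set.mem_union, hunion, hL.1 _ f α (hbelow true)]

theorem mem_label_cutBranch (hL : IsCutTree L) (x : K) (α : Ordinal.{u}) :
    x ∈ L (cutBranch L x) α := by
  classical
  induction α using Ordinal.limitRecOn with
  | zero => rw [hL.2.1]; trivial
  | add_one α ih =>
    set F := cutBranch L x
    have hFα : F α = decide (x ∈ L (Function.update F α true) (α + 1)) := by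
      rw [show F α = _ from cutBranch.eq_1 L x α]
      congr 2
      refine hL.label_succ_congr fun β hβ => ?_
      rcases hβ.lt_or_eq with hβ | rfl
      · simp [F, hβ, hβ.ne]
      · simp
    cases hb : F α
    · have hx : x ∉ L (Function.update F α true) (α + 1) := by simpa [hb] using hFα
      simpa [← hb] using (hL.mem_label_succ_or ih).resolve_left hx
    · have hx : x ∈ L (Function.update F α true) (α + 1) := by simpa [hb] using hFα.symm
      simpa [← hb] using hx
  | limit α hα ih =>
    rw [hL.2.2.2 _ _ hα]
    exact Set.mem_iInter₂.mpr ih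

theorem eq_of_cutBranch_eq (hL : IsCutTree L) {γ : Ordinal.{u}} {x y : K}
    (hwin : (⋂ β ∈ Set.Iio γ, L (cutBranch L x) β).Subsingleton)
    (hxy : ∀ β < γ, cutBranch L x β = cutBranch L y β) : x = y := by
  refine hwin (Set.mem_iInter₂.mpr fun β _ => hL.mem_label_cutBranch x β)
    (Set.mem_iInter₂.mpr fun β hβ => ?_)
  rw [hL.1 _ _ β fun β' hβ' => hxy β' (hβ'.trans hβ)]
  exact hL.mem_label_cutBranch y β

end IsCutTree

theorem stmt0_general {K : Type u} (γ : Ordinal.{u})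
    (hwin : ∃ L : (Ordinal.{u} → Bool) → Ordinal.{u} → Set K, IsCutTree L ∧
      ∀ f : Ordinal.{u} → Bool, (⋂ β ∈ Set.Iio γ, L f β).Subsingleton) :
    #K ≤ 2 ^ γ.card := by
  obtain ⟨L, hL, hsub⟩ := hwin
  have hinj : Function.Injective
      fun (x : K) (i : γ.ToType) => cutBranch L x (Ordinal.ToType.mk.symm i).1 := by
    intro x y hxy
    refine hL.eq_of_cutBranch_eq (hsub _) fun β hβ => ?_
    simpa using congrFun hxy (Ordinal.ToType.mk ⟨β, hβ⟩)
  calc #K ≤ #(γ.ToType → Bool) := mk_le_of_injective hinj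
    _ = 2 ^ γ.card := by simp [mk_toType]

/-- If `κ` is a regular cardinal, `γ ≤ κ` a limit ordinal, and Cut has a winning
strategy in the game `𝒰(κ,γ)` (i.e. a labeled binary tree of height `γ` all of whose
branch intersections have at most one element), then `κ ≤ 2 ^ |γ|`. -/
theorem stmt0 {K : Type u} (γ : Ordinal.{u}) (hreg : (#K).IsRegular)
    (hlim : Order.IsSuccLimit γ) (hle : γ ≤ (#K).ord)
    (hwin : ∃ L : (Ordinal.{u} → Bool) → Ordinal.{u} → Set K, IsCutTree L ∧
      ∀ f : Ordinal.{u} → Bool, (⋂ β ∈ Set.Iio γ, L f β).Subsingleton) :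
    #K ≤ 2 ^ γ.card :=
  stmt0_general γ hwin
end

section
/- Let κ be a regular cardinal and γ ≤ κ a limit ordinal. If κ ≤ 2^|γ|, then Cut has a winning strategy in the cut-and-choose game U(κ,γ). -/
open Cardinal Set

universe u

/-!
Code the points of `K` injectively by binary sequences of length `γ`, which is possible since
`#K ≤ 2 ^ |γ|`. At stage `α` Cut splits the current set according to the `α`-th digit of the
code, so the set reached along a branch `f` is the set of points whose code agrees with `f`
below `α`. After all `γ` stages the surviving points share their whole code, hence coincide.
-/

section CodeCylinder

variable {K : Type u} (e : K → Ordinal.{u} → Bool)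

def codeCylinder (f : Ordinal.{u} → Bool) (α : Ordinal.{u}) : Set K :=
  {x | ∀ β < α, e x β = f β}

theorem codeCylinder_congr {f g : Ordinal.{u} → Bool} {α : Ordinal.{u}}
    (hfg : ∀ β < α, f β = g β) : codeCylinder e f α = codeCylinder e g α := by
  ext x
  exact forall₂_congr fun β hβ => by rw [hfg β hβ]

theorem codeCylinder_zero (f : Ordinal.{u} → Bool) : codeCylinder e f 0 = Set.univ := by
  ext x
  simp [codeCylinder]

theorem codeCylinder_add_one (f : Ordinal.{u} → Bool) (α : Ordinal.{u}) :
    codeCylinder e f (α + 1) = codeCylinder e f α ∩ {x | e x α = f α} := by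
  ext x
  simp only [codeCylinder, mem_inter_iff, mem_ofPred_eq, Order.lt_add_one_iff, le_iff_lt_or_eq,
    or_imp, forall_and, forall_eq]

theorem codeCylinder_eq_iInter {f : Ordinal.{u} → Bool} {α : Ordinal.{u}}
    (hα : Order.IsSuccLimit α) : codeCylinder e f α = ⋂ β ∈ Iio α, codeCylinder e f β := by
  ext x
  simp only [codeCylinder, mem_iInter, mem_Iio, mem_ofPred_eq]
  exact ⟨fun hx β' hβ' β hβ => hx β (hβ.trans hβ'),
    fun hx β hβ => hx (β + 1) (hα.add_one_lt hβ) β (lt_add_one β)⟩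

theorem isCutTree_codeCylinder : IsCutTree (codeCylinder e) := by
  refine ⟨fun f g α => codeCylinder_congr e, codeCylinder_zero e,
    fun f g α hfg hf hg => ?_, fun f α => codeCylinder_eq_iInter e⟩
  simp only [codeCylinder_add_one, codeCylinder_congr e hfg, hf, hg]
  constructor
  · ext x
    simp only [mem_union, mem_inter_iff, mem_ofPred_eq]
    cases e x α <;> simp
  · exact Disjoint.inter_right' _ (Disjoint.inter_left' _
      (disjoint_left.mpr fun x hx hx' => by simp_all))

theorem codeCylinder_subsingleton {γ : Ordinal.{u}}
    (he : ∀ x y, (∀ β < γ, e x β = e y β) → x = y) (f : Ordinal.{u} → Bool) :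
    (codeCylinder e f γ).Subsingleton :=
  fun x hx y hy => he x y fun β hβ => (hx β hβ).trans (hy β hβ).symm

end CodeCylinder

theorem exists_code_of_mk_le_two_power {K : Type u} {γ : Ordinal.{u}} (hcard : #K ≤ 2 ^ γ.card) :
    ∃ e : K → Ordinal.{u} → Bool, ∀ x y, (∀ β < γ, e x β = e y β) → x = y := by
  have hK : #K ≤ #(γ.ToType → Bool) := by simpa using hcard
  obtain ⟨i⟩ := hK
  refine ⟨fun x β => if h : β < γ then i x (Ordinal.ToType.mk ⟨β, h⟩) else true,
    fun x y hxy => i.injective (funext fun t => ?_)⟩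
  obtain ⟨⟨β, hβ⟩, rfl⟩ := Ordinal.ToType.mk.surjective t
  simpa only [dif_pos (mem_Iio.mp hβ)] using hxy β hβ

theorem stmt1_general {K : Type u} (γ : Ordinal.{u})
    (hlim : Order.IsSuccLimit γ)
    (hcard : #K ≤ 2 ^ γ.card) :
    ∃ L : (Ordinal.{u} → Bool) → Ordinal.{u} → Set K, IsCutTree L ∧
      ∀ f : Ordinal.{u} → Bool, (⋂ β ∈ Set.Iio γ, L f β).Subsingleton := by
  obtain ⟨e, he⟩ := exists_code_of_mk_le_two_power hcard
  refine ⟨codeCylinder e, isCutTree_codeCylinder e, fun f => ?_⟩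
  rw [← codeCylinder_eq_iInter e hlim]
  exact codeCylinder_subsingleton e he f

/-- If `κ` is a regular cardinal, `γ ≤ κ` a limit ordinal and `κ ≤ 2 ^ |γ|`, then Cut has a
winning strategy in the game `𝒰(κ,γ)`: a labeled binary tree of height `γ` all of whose
branch intersections have at most one element. -/
theorem stmt1 {K : Type u} (γ : Ordinal.{u}) (hreg : (#K).IsRegular)
    (hlim : Order.IsSuccLimit γ) (hle : γ ≤ (#K).ord)
    (hcard : #K ≤ 2 ^ γ.card) :
    ∃ L : (Ordinal.{u} → Bool) → Ordinal.{u} → Set K, IsCutTree L ∧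
      ∀ f : Ordinal.{u} → Bool, (⋂ β ∈ Set.Iio γ, L f β).Subsingleton :=
  stmt1_general γ hlim hcard
end

section
/- Let κ be a regular uncountable cardinal and γ < κ a limit ordinal. If Cut has a winning strategy in the game U(κ,≤γ), then κ ≤ 2^{<γ}, where 2^{<γ} = sup{2^δ : δ < γ a cardinal}. -/
open Cardinal Set

universe u

/-- `2 ^{<γ} = sup { 2 ^ δ : δ < γ a cardinal }`. -/
noncomputable def twoPowLT (γ : Ordinal.{u}) : Cardinal.{u} :=
  ⨆ δ : {δ : Cardinal.{u} // δ.ord < γ}, 2 ^ δ.1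

/-!
Let Choose play against Cut's tree so as to keep a fixed point `x` in her choices: this
defines a branch all of whose labels contain `x`. As Cut wins, this branch must reach a node
labeled `{x}` at some successor level `β + 1 < γ`, and `x` is recovered from that node.
Hence `κ` injects into the set of nodes of height `< γ`, which has size at most
`|γ| · 2^{<γ}`; since `|γ|` is infinite and `|γ| < κ`, this forces `κ ≤ 2^{<γ}`.
-/

theorem Cardinal.le_of_le_mul_of_lt {a b c : Cardinal} (ha : ℵ₀ ≤ a) (hc : c ≤ a * b)
    (hac : a < c) : c ≤ b := by
  have := hc.trans (mul_le_max_of_aleph0_le_left ha)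
  exact (le_max_iff.mp this).resolve_left hac.not_ge

theorem two_pow_le_twoPowLT {γ : Ordinal.{u}} {δ : Cardinal.{u}} (hδ : δ.ord < γ) :
    2 ^ δ ≤ twoPowLT γ := by
  have hbdd :
      BddAbove (range fun δ : {δ : Cardinal.{u} // δ.ord < γ} => (2 : Cardinal) ^ δ.1) := by
    refine ⟨2 ^ γ.card, ?_⟩
    rintro _ ⟨δ, rfl⟩
    exact power_le_power_left two_ne_zero (by simpa using Ordinal.card_le_card δ.2.le)
  exact le_ciSup hbdd ⟨δ, hδ⟩

/-- The nodes of height `< γ` of the full binary tree, each given as a level and a prefix. -/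
theorem mk_sigma_prefix_le (γ : Ordinal.{u}) :
    #(Σ α : Iio γ, (Iio α.1 → Bool)) ≤ lift.{u + 1} (γ.card * twoPowLT γ) := by
  have hprefix : ∀ α : Iio γ, #(Iio α.1 → Bool) ≤ lift.{u + 1} (twoPowLT γ) := by
    intro α
    rw [mk_arrow, mk_bool, mk_Iio_ordinal]
    simp only [lift_two, lift_lift]
    rw [← lift_two.{u + 1, u}, ← lift_power, lift_le]
    exact two_pow_le_twoPowLT ((Cardinal.ord_card_le _).trans_lt α.2)
  calc #(Σ α : Iio γ, (Iio α.1 → Bool))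
      ≤ sum fun _ : Iio γ => lift.{u + 1} (twoPowLT γ) := mk_sigma _ ▸ sum_le_sum _ _ hprefix
    _ = lift.{u + 1} (γ.card * twoPowLT γ) := by
      rw [sum_const', mk_Iio_ordinal, lift_mul]

namespace IsCutTree

variable {K : Type u} {L : (Ordinal.{u} → Bool) → Ordinal.{u} → Set K}

noncomputable def extendAt (c : Ordinal.{u} → Bool) (α : Ordinal.{u}) (b : Bool) :
    Ordinal.{u} → Bool :=
  fun δ => if δ < α then c δ else b

open scoped Classical in
/-- The branch along which Choose always picks the half containing `x`. -/
noncomputable def branchOf (L : (Ordinal.{u} → Bool) → Ordinal.{u} → Set K) (x : K) :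
    Ordinal.{u} → Bool
  | α => decide (x ∈ L (fun β => if _ : β < α then branchOf L x β else true) (α + 1))
  termination_by α => α

theorem branchOf_eq_true_iff (x : K) (α : Ordinal.{u}) :
    branchOf L x α = true ↔ x ∈ L (extendAt (branchOf L x) α true) (α + 1) := by
  rw [branchOf]
  simp only [decide_eq_true_eq, dite_eq_ite]
  rfl

theorem label_succ_eq_extendAt (hL : IsCutTree L) (c : Ordinal.{u} → Bool) (α : Ordinal.{u}) :
    L c (α + 1) = L (extendAt c α (c α)) (α + 1) := by
  refine hL.1 _ _ _ fun δ hδ => ?_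
  rcases (Order.lt_succ_iff.mp hδ).lt_or_eq with hδ | rfl <;> simp [extendAt, *]

theorem label_succ_true_union_false (hL : IsCutTree L) (c : Ordinal.{u} → Bool)
    (α : Ordinal.{u}) :
    L (extendAt c α true) (α + 1) ∪ L (extendAt c α false) (α + 1) = L c α := by
  rw [(hL.2.2.1 _ _ α (fun δ hδ => by simp [extendAt, hδ]) (by simp [extendAt])
    (by simp [extendAt])).1]
  exact hL.1 _ _ α fun δ hδ => by simp [extendAt, hδ]

theorem mem_label_branchOf (hL : IsCutTree L) (x : K) (α : Ordinal.{u}) :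
    x ∈ L (branchOf L x) α := by
  induction α using Ordinal.limitRecOn with
  | zero => simp [hL.2.1]
  | add_one α ih =>
    rw [label_succ_eq_extendAt hL]
    rw [← label_succ_true_union_false hL] at ih
    cases hα : branchOf L x α
    · exact ih.resolve_left fun hx => by simp [(branchOf_eq_true_iff x α).mpr hx] at hα
    · exact (branchOf_eq_true_iff x α).mp hα
  | limit α hα ih =>
    rw [hL.2.2.2 _ _ hα]
    exact mem_iInter₂.mpr ih

theorem exists_label_branchOf_eq_singleton (hL : IsCutTree L) {γ : Ordinal.{u}}
    (hwin : ∀ f : Ordinal.{u} → Bool,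
      (∃ β < γ, ∃ x : K, L f (β + 1) = {x}) ∨ (⋂ β ∈ Iio γ, L f β) = ∅) (x : K) :
    ∃ β < γ, L (branchOf L x) (β + 1) = {x} := by
  rcases hwin (branchOf L x) with ⟨β, hβ, y, hy⟩ | hempty
  · have hx := mem_label_branchOf hL x (β + 1)
    rw [hy, mem_singleton_iff] at hx
    exact ⟨β, hβ, hx ▸ hy⟩
  · have hx : x ∈ ⋂ β ∈ Iio γ, L (branchOf L x) β :=
      mem_iInter₂.mpr fun β _ => mem_label_branchOf hL x β
    rw [hempty] at hx
    exact hx.elim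

theorem mk_le_card_mul_twoPowLT (hL : IsCutTree L) {γ : Ordinal.{u}}
    (hlim : Order.IsSuccLimit γ)
    (hwin : ∀ f : Ordinal.{u} → Bool,
      (∃ β < γ, ∃ x : K, L f (β + 1) = {x}) ∨ (⋂ β ∈ Iio γ, L f β) = ∅) :
    #K ≤ γ.card * twoPowLT γ := by
  choose β hβγ hβ using exists_label_branchOf_eq_singleton hL hwin
  let node : K → Σ α : Iio γ, (Iio α.1 → Bool) := fun x =>
    ⟨⟨β x + 1, hlim.succ_lt (hβγ x)⟩, fun δ => branchOf L x δ⟩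
  have hnode : Function.Injective node := by
    intro x y hxy
    have hlevel : β x + 1 = β y + 1 := congrArg (fun p => p.1.1) hxy
    have hagree : ∀ δ < β x + 1, branchOf L x δ = branchOf L y δ := by
      intro δ hδ
      -- Reading both prefixes as total branches avoids a heterogeneous equality.
      have := congrFun
        (congrArg (fun p δ => if h : δ < p.1.1 then p.2 ⟨δ, h⟩ else true) hxy) δ
      simpa [node, hδ, hlevel ▸ hδ] using this
    have := hL.1 _ _ _ hagree
    rwa [hβ x, hlevel, hβ y, singleton_eq_singleton_iff] at this
  rw [← lift_le.{u + 1}]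
  exact (lift_mk_le'.mpr ⟨⟨node, hnode⟩⟩).trans_eq (lift_id'.{u, u + 1} _) |>.trans
    (mk_sigma_prefix_le γ)

end IsCutTree

theorem stmt3_general {K : Type u} (γ : Ordinal.{u})
    (hlim : Order.IsSuccLimit γ) (hlt : γ < (#K).ord)
    (hwin : ∃ L : (Ordinal.{u} → Bool) → Ordinal.{u} → Set K, IsCutTree L ∧
      ∀ f : Ordinal.{u} → Bool,
        (∃ β < γ, ∃ x : K, L f (β + 1) = {x}) ∨ (⋂ β ∈ Set.Iio γ, L f β) = ∅) :
    #K ≤ twoPowLT γ := by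
  obtain ⟨L, hL, hwin⟩ := hwin
  exact le_of_le_mul_of_lt (Ordinal.aleph0_le_card.mpr (Ordinal.omega0_le_of_isSuccLimit hlim))
    (hL.mk_le_card_mul_twoPowLT hlim hwin) (lt_ord.mp hlt)

/-- If `κ` is regular uncountable, `γ < κ` a limit ordinal, and Cut has a winning strategy
in the game `𝒰(κ,≤γ)` (a labeled binary tree of height `γ` such that along every branch,
either Choose at some point picked a singleton, or the final intersection is empty),
then `κ ≤ 2^{<γ}`. -/
theorem stmt3 {K : Type u} (γ : Ordinal.{u}) (hreg : (#K).IsRegular) (hunc : ℵ₀ < #K)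
    (hlim : Order.IsSuccLimit γ) (hlt : γ < (#K).ord)
    (hwin : ∃ L : (Ordinal.{u} → Bool) → Ordinal.{u} → Set K, IsCutTree L ∧
      ∀ f : Ordinal.{u} → Bool,
        (∃ β < γ, ∃ x : K, L f (β + 1) = {x}) ∨ (⋂ β ∈ Set.Iio γ, L f β) = ∅) :
    #K ≤ twoPowLT γ :=
  stmt3_general γ hlim hlt hwin
end

section
/- Let κ be a regular uncountable cardinal and γ < κ a regular limit ordinal with κ ≤ 2^{<γ}. Then Cut has a winning strategy in the game U(κ,≤γ). -/
/-!
As `#K` is regular and `γ < #K`, the supremum `2^{<γ}` of `γ` many cardinals can only reach `#K`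
if one of them does: `#K ≤ 2 ^ |ρ|` for some `ρ < γ`. So the elements of `K` can be coded
injectively by binary sequences of length `ρ`, and Cut splits the current set by one digit of
the code per round. After `ρ + 1 < γ` rounds the chosen piece has at most one element: either
Choose has picked a singleton, or the final intersection is empty.
-/

open Cardinal Set

universe u

open Function

theorem exists_lt_le_two_pow_card_of_le_twoPowLT {κ : Cardinal.{u}} {γ : Ordinal.{u}}
    (hγ : γ.card < κ.ord.cof) (h : κ ≤ twoPowLT γ) : ∃ ρ < γ, κ ≤ 2 ^ ρ.card := by
  by_contra! hlt
  have hsmall : Cardinal.lift.{u} #{δ : Cardinal.{u} // δ.ord < γ} <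
      (Cardinal.lift.{u + 1} κ).ord.cof := by
    have : #{δ : Cardinal.{u} // δ.ord < γ} ≤ #(Iio γ) :=
      mk_le_of_injective (f := fun δ => ⟨δ.1.ord, δ.2⟩) fun δ δ' hδ =>
        Subtype.ext (ord_injective (congrArg Subtype.val hδ))
    rw [mk_Iio_ordinal] at this
    rw [← lift_ord, ← Ordinal.lift_cof, lift_id'.{u, u + 1}]
    exact this.trans_lt (lift_lt.2 hγ)
  exact h.not_gt <| lift_iSup_lt_of_lt_cof_ord hsmall fun δ => by
    simpa using hlt δ.1.ord δ.2

theorem exists_injective_domRestrict_Iio {K : Type u} {ρ : Ordinal.{u}} (h : #K ≤ 2 ^ ρ.card) :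
    ∃ y : K → Ordinal.{u} → Bool, Injective fun x => (Iio ρ).domRestrict (y x) := by
  obtain ⟨j⟩ : #K ≤ #(ρ.ToType → Bool) := by simpa [← power_def] using h
  refine ⟨fun x β => if hβ : β < ρ then j x (Ordinal.ToType.mk ⟨β, hβ⟩) else false,
    fun x x' hxx' => j.injective (funext fun c => ?_)⟩
  obtain ⟨⟨β, hβ⟩, rfl⟩ := Ordinal.ToType.mk.surjective c
  simpa only [domRestrict_apply, dif_pos (mem_Iio.1 hβ)] using congrFun hxx' ⟨β, hβ⟩

section DigitTree

variable {K : Type u}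

def digitTree (y : K → Ordinal.{u} → Bool) (f : Ordinal.{u} → Bool) (α : Ordinal.{u}) :
    Set K :=
  {x | ∀ β < α, y x β = f β}

variable (y : K → Ordinal.{u} → Bool)

theorem digitTree_succ (f : Ordinal.{u} → Bool) (α : Ordinal.{u}) :
    digitTree y f (α + 1) = digitTree y f α ∩ {x | y x α = f α} := by
  ext x
  simp only [digitTree, mem_inter_iff, mem_ofPred_eq, Order.lt_add_one_iff,
    le_iff_lt_or_eq, or_imp, forall_and, forall_eq]

theorem isCutTree_digitTree : IsCutTree (digitTree y) := by
  refine ⟨fun f g α hfg => ?_, fun f => ?_, fun f g α hfg hf hg => ?_, fun f α hα => ?_⟩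
  · ext x
    exact forall₂_congr fun β hβ => by rw [hfg β hβ]
  · ext x
    simp [digitTree]
  · have hα : digitTree y g α = digitTree y f α := by
      ext x
      exact forall₂_congr fun β hβ => by rw [hfg β hβ]
    rw [digitTree_succ, digitTree_succ, hα, hf, hg, ← inter_union_distrib_left]
    refine ⟨inter_eq_left.2 fun x _ => ?_, ?_⟩
    · cases y x α <;> simp
    · exact disjoint_left.2 fun x hx hx' => by simp_all
  · ext x
    simp only [digitTree, mem_iInter, mem_ofPred_eq, mem_Iio]
    exact ⟨fun h β hβ γ hγ => h γ (hγ.trans hβ),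
      fun h β hβ => h (β + 1) (hα.add_one_lt hβ) β (lt_add_one _)⟩

theorem digitTree_subsingleton {ρ : Ordinal.{u}}
    (hy : Injective fun x => (Iio ρ).domRestrict (y x)) (f : Ordinal.{u} → Bool) :
    (digitTree y f ρ).Subsingleton :=
  fun _ hx _ hx' => hy <| funext fun ⟨β, hβ⟩ => (hx β hβ).trans (hx' β hβ).symm

theorem digitTree_singleton_or_iInter_eq_empty {ρ γ : Ordinal.{u}}
    (hy : Injective fun x => (Iio ρ).domRestrict (y x)) (hργ : ρ + 1 < γ)
    (f : Ordinal.{u} → Bool) :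
    (∃ β < γ, ∃ x : K, digitTree y f (β + 1) = {x}) ∨
      (⋂ β ∈ Iio γ, digitTree y f β) = ∅ := by
  have hsub : (digitTree y f (ρ + 1)).Subsingleton :=
    (digitTree_subsingleton y hy f).anti fun x hx β hβ => hx β (hβ.trans (lt_add_one _))
  rcases hsub.eq_empty_or_singleton with hempty | ⟨x, hx⟩
  · exact Or.inr (subset_empty_iff.1 (hempty ▸ biInter_subset_of_mem hργ))
  · exact Or.inl ⟨ρ, (lt_add_one _).trans hργ, x, hx⟩

end DigitTree

theorem stmt4_general {K : Type u} (γ : Ordinal.{u}) (hreg : (#K).IsRegular)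
    (hlim : Order.IsSuccLimit γ) (hlt : γ < (#K).ord)
    (hcard : #K ≤ twoPowLT γ) :
    ∃ L : (Ordinal.{u} → Bool) → Ordinal.{u} → Set K, IsCutTree L ∧
      ∀ f : Ordinal.{u} → Bool,
        (∃ β < γ, ∃ x : K, L f (β + 1) = {x}) ∨ (⋂ β ∈ Set.Iio γ, L f β) = ∅ := by
  obtain ⟨ρ, hργ, hρ⟩ :=
    exists_lt_le_two_pow_card_of_le_twoPowLT (by rwa [hreg.cof_ord, ← lt_ord]) hcard
  obtain ⟨y, hy⟩ := exists_injective_domRestrict_Iio hρ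
  exact ⟨digitTree y, isCutTree_digitTree y,
    digitTree_singleton_or_iInter_eq_empty y hy (hlim.add_one_lt hργ)⟩

/-- If `κ` is regular uncountable, `γ < κ` is a regular limit ordinal and `κ ≤ 2^{<γ}`,
then Cut has a winning strategy in the game `𝒰(κ,≤γ)`: a labeled binary tree of height
`γ` such that along every branch, either Choose at some stage `β < γ` picked a singleton,
or the final intersection is empty. -/
theorem stmt4 {K : Type u} (γ : Ordinal.{u}) (hreg : (#K).IsRegular) (hunc : ℵ₀ < #K)
    (hlim : Order.IsSuccLimit γ) (hγreg : γ.cof.ord = γ) (hlt : γ < (#K).ord)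
    (hcard : #K ≤ twoPowLT γ) :
    ∃ L : (Ordinal.{u} → Bool) → Ordinal.{u} → Set K, IsCutTree L ∧
      ∀ f : Ordinal.{u} → Bool,
        (∃ β < γ, ∃ x : K, L f (β + 1) = {x}) ∨ (⋂ β ∈ Set.Iio γ, L f β) = ∅ :=
  stmt4_general γ hreg hlim hlt hcard
end

section
/- Let κ be regular uncountable and I a <κ-complete ideal on κ containing all singletons, with the property that every I-positive set can be partitioned into κ-many pairwise disjoint I-positive sets. Then for every X ∈ I⁺, Cut has a winning strategy in the game U_κ(X, I, ω) in which Cut may partition X into κ-many disjoint I-positive pieces each round. -/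
/-!
Split `X` into countably many `I`-positive pieces `Xₙ` (by coarsening a `κ`-partition of `X`)
whose complements in `X` are still positive. Each `Xₙ` has size `κ`, so at round `n` Cut can play
a partition of `X` whose `α`-th piece is `{eₙ α} ∪ Dₙ α`, where `eₙ : κ ≃ Xₙ` and `Dₙ` is a
positive `κ`-partition of `X \ Xₙ`. A point of the final intersection lies in some `Xₘ`, hence is
the point `eₘ (gₘ)`: the intersection is countable, so it lies in `I`. Cut's move thus depends
only on the round number, not on Choose's earlier picks.
-/

open Cardinal Set Function

universe u

section DisjointCover

variable {α ι κ : Type*} {X : Set α} {A : ι → Set α}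

def IsDisjointCover (X : Set α) (A : ι → Set α) : Prop :=
  (⋃ i, A i) = X ∧ Pairwise (Disjoint on A)

theorem IsDisjointCover.subset (h : IsDisjointCover X A) (i : ι) : A i ⊆ X :=
  h.1 ▸ subset_iUnion A i

theorem IsDisjointCover.subset_diff (h : IsDisjointCover X A) {i j : ι} (hij : i ≠ j) :
    A i ⊆ X \ A j :=
  fun _ hx => ⟨h.subset i hx, fun hx' => (h.2 hij).le_bot ⟨hx, hx'⟩⟩

theorem IsDisjointCover.fiberUnion (h : IsDisjointCover X A) (p : ι → κ) :
    IsDisjointCover X (fun k => ⋃ (i) (_ : p i = k), A i) := by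
  refine ⟨?_, fun k k' hkk' => ?_⟩
  · rw [← h.1]
    ext x
    simp
  · simp only [onFun, disjoint_iUnion₂_left, disjoint_iUnion₂_right]
    rintro i rfl i' rfl
    exact h.2 fun hii' => hkk' (congrArg p hii')

theorem IsDisjointCover.insert_equiv {Y : Set α} (hYX : Y ⊆ X) (h : IsDisjointCover (X \ Y) A)
    (e : ι ≃ Y) : IsDisjointCover X (fun i => insert (e i : α) (A i)) := by
  have hnot : ∀ i j, (e i : α) ∉ A j := fun i j hi => (h.subset j hi).2 (e i).2
  refine ⟨?_, fun i j hij => ?_⟩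
  · simp only [insert_eq, iUnion_union_distrib, iUnion_singleton_eq_range, h.1]
    rw [range_comp' Subtype.val e, e.range_eq_univ, image_univ, Subtype.range_coe,
      union_sdiff_cancel hYX]
  · have hne : (e i : α) ≠ e j := fun he => hij (e.injective (Subtype.ext he))
    simp only [onFun, disjoint_insert_left, disjoint_insert_right, mem_insert_iff, not_or]
    exact ⟨⟨hne.symm, hnot j i⟩, hnot i j, h.2 hij⟩

end DisjointCover

theorem iInter_subset_range_of_inter_subset_singleton {α ι : Type*} {B Y : ι → Set α} {c : ι → α}
    (hBY : ⋂ i, B i ⊆ ⋃ i, Y i) (hc : ∀ i, B i ∩ Y i ⊆ {c i}) : ⋂ i, B i ⊆ range c := by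
  intro x hx
  obtain ⟨i, hxi⟩ := mem_iUnion.mp (hBY hx)
  exact ⟨i, (hc i ⟨mem_iInter.mp hx i, hxi⟩).symm⟩

section Ideal

variable {α : Type*} {I : Set (Set α)}

theorem exists_nat_disjointCover_notMem {ι : Type*} (hmono : ∀ A ∈ I, ∀ B, B ⊆ A → B ∈ I)
    {X : Set α} {A : ι → Set α} (hA : IsDisjointCover X A) (hApos : ∀ i, A i ∉ I)
    {p : ι → ℕ} (hp : Surjective p) :
    ∃ Y : ℕ → Set α, IsDisjointCover X Y ∧ (∀ n, Y n ∉ I) ∧ ∀ n, X \ Y n ∉ I := by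
  have hY := hA.fiberUnion p
  have hpos : ∀ n, (⋃ (i) (_ : p i = n), A i) ∉ I := by
    intro n hn
    obtain ⟨i, rfl⟩ := hp n
    exact hApos i (hmono _ hn _ (subset_biUnion_of_mem (u := A) rfl))
  refine ⟨_, hY, hpos, fun n hn => hpos (n + 1) ?_⟩
  exact hmono _ hn _ (hY.subset_diff (Nat.succ_ne_self n))

end Ideal

section SmallSets

variable {K : Type u} {I : Set (Set K)}

theorem mem_of_mk_lt
    (hcomp : ∀ (ι : Type u), #ι < #K → ∀ A : ι → Set K, (∀ i, A i ∈ I) → (⋃ i, A i) ∈ I)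
    (hsing : ∀ x : K, ({x} : Set K) ∈ I) {S : Set K} (hS : #S < #K) : S ∈ I := by
  simpa only [iUnion_of_singleton_coe] using hcomp S hS (fun x => {(x : K)}) (fun x => hsing x)

theorem mk_eq_of_notMem (hsmall : ∀ S : Set K, #S < #K → S ∈ I) {Y : Set K} (hY : Y ∉ I) :
    #Y = #K :=
  (mk_set_le Y).antisymm (not_lt.mp fun h => hY (hsmall Y h))

theorem exists_disjointCover_inter_subset_singleton (hmono : ∀ A ∈ I, ∀ B, B ⊆ A → B ∈ I)
    (hpart : ∀ Y : Set K, Y ∉ I → ∃ A : K → Set K, (⋃ α, A α) = Y ∧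
      (∀ α β : K, α ≠ β → Disjoint (A α) (A β)) ∧ ∀ α, A α ∉ I)
    {X Y : Set K} (hYX : Y ⊆ X) (hYK : #Y = #K) (hXY : X \ Y ∉ I) :
    ∃ (C : K → Set K) (c : K → K),
      IsDisjointCover X C ∧ (∀ α, C α ∉ I) ∧ ∀ α, C α ∩ Y ⊆ {c α} := by
  obtain ⟨e⟩ : Nonempty (K ≃ Y) := Cardinal.eq.mp hYK.symm
  obtain ⟨D, hDU, hDdisj, hDpos⟩ := hpart _ hXY
  have hD : IsDisjointCover (X \ Y) D := ⟨hDU, hDdisj⟩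
  refine ⟨fun α => insert (e α : K) (D α), fun α => e α, hD.insert_equiv hYX e,
    fun α h => hDpos α (hmono _ h _ (subset_insert _ _)), ?_⟩
  rintro α x ⟨rfl | hxD, hxY⟩
  · rfl
  · exact absurd hxY (hD.subset α hxD).2

end SmallSets

theorem stmt13_general {K : Type u} (hunc : ℵ₀ < #K)
    (I : Set (Set K)) (hmono : ∀ A ∈ I, ∀ B, B ⊆ A → B ∈ I)
    (hcomp : ∀ (ι : Type u), #ι < #K → ∀ A : ι → Set K,
      (∀ i, A i ∈ I) → (⋃ i, A i) ∈ I)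
    (hsing : ∀ x : K, ({x} : Set K) ∈ I)
    (hpart : ∀ Y : Set K, Y ∉ I → ∃ A : K → Set K, (⋃ α, A α) = Y ∧
      (∀ α β : K, α ≠ β → Disjoint (A α) (A β)) ∧ ∀ α, A α ∉ I)
    (X : Set K) (hX : X ∉ I) :
    ∃ σ : List K → (K → Set K),
      (∀ l : List K, (⋃ α, σ l α) = X ∧
        (∀ α β : K, α ≠ β → Disjoint (σ l α) (σ l β)) ∧ ∀ α, σ l α ∉ I) ∧
      ∀ g : ℕ → K, (⋂ n : ℕ, σ ((List.range n).map g) (g n)) ∈ I := by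
  have hsmall : ∀ S : Set K, #S < #K → S ∈ I := fun S => mem_of_mk_lt hcomp hsing
  have : Infinite K := infinite_iff.mpr hunc.le
  obtain ⟨A, hAU, hAdisj, hApos⟩ := hpart X hX
  obtain ⟨Y, hY, hYpos, hXYpos⟩ := exists_nat_disjointCover_notMem hmono ⟨hAU, hAdisj⟩ hApos
    (invFun_surjective (Infinite.natEmbedding K).injective)
  choose C c hC hCpos hCY using fun n => exists_disjointCover_inter_subset_singleton hmono hpart
    (hY.subset n) (mk_eq_of_notMem hsmall (hYpos n)) (hXYpos n)
  refine ⟨fun l => C l.length, fun l => ⟨(hC _).1, (hC _).2, hCpos _⟩, fun g => ?_⟩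
  simp only [List.length_map, List.length_range]
  have hcover : ⋂ n, C n (g n) ⊆ ⋃ n, Y n :=
    hY.1 ▸ (iInter_subset _ 0).trans ((hC 0).subset _)
  exact hmono _ (hsmall _ ((countable_range _).le_aleph0.trans_lt hunc)) _
    (iInter_subset_range_of_inter_subset_singleton hcover fun n => hCY n (g n))

/-- Let `κ` be regular uncountable and `I` a `<κ`-complete ideal on `κ` containing all
singletons, such that every `I`-positive set can be partitioned into `κ`-many pairwise
disjoint `I`-positive sets.  Then for every `I`-positive `X`, Cut has a winning strategy
in the game `𝒰_κ(X, I, ω)`: a strategy `σ` (a function from finite sequences of Choose's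
picks to disjoint partitions of `X` into `κ`-many `I`-positive pieces, indexed by `κ`
itself) such that for every play `g` of Choose, the intersection of the chosen pieces
lies in `I`. -/
theorem stmt13 {K : Type u} (hreg : (#K).IsRegular) (hunc : ℵ₀ < #K)
    (I : Set (Set K)) (hmono : ∀ A ∈ I, ∀ B, B ⊆ A → B ∈ I)
    (hcomp : ∀ (ι : Type u), #ι < #K → ∀ A : ι → Set K,
      (∀ i, A i ∈ I) → (⋃ i, A i) ∈ I)
    (hsing : ∀ x : K, ({x} : Set K) ∈ I)
    (hpart : ∀ Y : Set K, Y ∉ I → ∃ A : K → Set K, (⋃ α, A α) = Y ∧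
      (∀ α β : K, α ≠ β → Disjoint (A α) (A β)) ∧ ∀ α, A α ∉ I)
    (X : Set K) (hX : X ∉ I) :
    ∃ σ : List K → (K → Set K),
      (∀ l : List K, (⋃ α, σ l α) = X ∧
        (∀ α β : K, α ≠ β → Disjoint (σ l α) (σ l β)) ∧ ∀ α, σ l α ∉ I) ∧
      ∀ g : ℕ → K, (⋂ n : ℕ, σ ((List.range n).map g) (g n)) ∈ I :=
  stmt13_general hunc I hmono hcomp hsing hpart X hX
end

section
/- Let κ be regular uncountable, I a <κ-complete ideal on κ extending the bounded ideal, γ < κ a limit ordinal, and ν < κ a cardinal. Then the games U_ν(X, I, γ) (with disjoint partitions into at most ν pieces) and G_ν(X, I, γ) (with I-partitions of size at most ν) are equivalent: Cut wins one iff Cut wins the other, and Choose wins one iff Choose wins the other. -/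
open Cardinal Set

universe u

/-- Cut has a winning strategy in the cut-and-choose game of length `γ` on `κ` in which
Cut's moves are families of subsets of `κ` satisfying `Legal`, Choose picks one member
each round, and Choose wins iff the intersection of all their choices is `I`-positive. -/
def CutWinsFam {K : Type u} (I : Set (Set K)) (γ : Ordinal.{u})
    (Legal : Set (Set K) → Prop) : Prop :=
  ∃ σ : (Ordinal.{u} → Set K) → Ordinal.{u} → Set (Set K),
    (∀ h h' : Ordinal.{u} → Set K, ∀ α : Ordinal.{u},
      (∀ β < α, h β = h' β) → σ h α = σ h' α) ∧
    (∀ h : Ordinal.{u} → Set K, ∀ α < γ, Legal (σ h α)) ∧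
    ∀ h : Ordinal.{u} → Set K, (∀ α < γ, h α ∈ σ h α) → (⋂ α ∈ Set.Iio γ, h α) ∈ I

/-- Choose has a winning strategy in the cut-and-choose game of length `γ` on `κ` in
which Cut's moves are families of subsets of `κ` satisfying `Legal`, Choose picks one
member each round, and Choose wins iff the intersection of all their choices is
`I`-positive. -/
def ChooseWinsFam {K : Type u} (I : Set (Set K)) (γ : Ordinal.{u})
    (Legal : Set (Set K) → Prop) : Prop :=
  ∃ τ : (Ordinal.{u} → Set (Set K)) → Ordinal.{u} → Set K,
    (∀ W W' : Ordinal.{u} → Set (Set K), ∀ α : Ordinal.{u},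
      (∀ β ≤ α, W β = W' β) → τ W α = τ W' α) ∧
    ∀ W : Ordinal.{u} → Set (Set K), (∀ α < γ, Legal (W α)) →
      (∀ α < γ, τ W α ∈ W α) ∧ (⋂ α ∈ Set.Iio γ, τ W α) ∉ I

/-- A legal move of Cut in `𝒰_ν(X, I, γ)`: a disjoint partition of `X` into at most
`ν`-many pieces. -/
def LegalDisjoint {K : Type u} (X : Set K) (ν : Cardinal.{u}) (W : Set (Set K)) : Prop :=
  #W ≤ ν ∧ (∀ A ∈ W, ∀ B ∈ W, A ≠ B → Disjoint A B) ∧ ⋃₀ W = X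

/-- A legal move of Cut in `𝒢_ν(X, I, γ)`: an `I`-partition of `X` of size at most `ν`,
i.e. a maximal family of `I`-positive subsets of `X` with pairwise intersections
in `I`. -/
def LegalIPart {K : Type u} (I : Set (Set K)) (X : Set K) (ν : Cardinal.{u})
    (W : Set (Set K)) : Prop :=
  #W ≤ ν ∧ (∀ A ∈ W, A ⊆ X ∧ A ∉ I) ∧ (∀ A ∈ W, ∀ B ∈ W, A ≠ B → A ∩ B ∈ I) ∧
    ∀ Z : Set K, Z ⊆ X → Z ∉ I → ∃ w ∈ W, Z ∩ w ∉ I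

/-!
Discarding the null pieces of a disjoint partition of `X` into `≤ ν < κ` pieces yields an
`I`-partition, and the full disjointification of an `I`-partition `W` of `X` is a disjoint
partition each of whose pieces lies in a member of `W` up to the null set `X \ ⋃₀ W`.
So every move of either game can be simulated by a move of the other, and a reply in the
simulating game is translated back to a reply in the simulated one that covers it up to a
null set. Along a play of length `γ < κ` these null errors add up to a null set, so the
translated plays have the same winner.
-/

namespace CutChoose

variable {K : Type u} {I : Set (Set K)} {κ : Cardinal.{u}}

def UnionClosedBelow (I : Set (Set K)) (κ : Cardinal.{u}) : Prop :=
  ∀ ι : Type u, #ι < κ → ∀ A : ι → Set K, (∀ i, A i ∈ I) → (⋃ i, A i) ∈ I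

theorem UnionClosedBelow.sUnion_mem (hcomp : UnionClosedBelow I κ) {S : Set (Set K)}
    (hS : #S < κ) (h : ∀ A ∈ S, A ∈ I) : ⋃₀ S ∈ I := by
  rw [sUnion_eq_iUnion]
  exact hcomp S hS _ fun A => h A A.2

theorem UnionClosedBelow.union_mem (hcomp : UnionClosedBelow I κ) (hκ : ℵ₀ < κ)
    {A B : Set K} (hA : A ∈ I) (hB : B ∈ I) : A ∪ B ∈ I := by
  rw [← sUnion_pair]
  refine hcomp.sUnion_mem ((toFinite _).lt_aleph0.trans hκ) ?_
  rintro C (rfl | rfl)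
  exacts [hA, hB]

theorem UnionClosedBelow.biUnion_Iio_mem (hcomp : UnionClosedBelow I κ) {γ : Ordinal.{u}}
    (hγ : γ.card < κ) {N : Ordinal.{u} → Set K} (hN : ∀ α < γ, N α ∈ I) :
    ⋃ α ∈ Iio γ, N α ∈ I := by
  rw [← sUnion_image]
  refine hcomp.sUnion_mem (lt_of_le_of_lt ?_ hγ) (by rintro _ ⟨α, hα, rfl⟩; exact hN α hα)
  have h := mk_image_le_lift (f := N) (s := Iio γ)
  rwa [mk_Iio_ordinal, lift_lift, lift_le] at h

theorem UnionClosedBelow.biInter_mem_of_subset_union (hcomp : UnionClosedBelow I κ)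
    (hI : IsLowerSet I) (hκ : ℵ₀ < κ) {γ : Ordinal.{u}} (hγ : γ.card < κ)
    {A B N : Ordinal.{u} → Set K} (hN : ∀ α < γ, N α ∈ I) (hAB : ∀ α < γ, A α ⊆ B α ∪ N α)
    (hB : ⋂ α ∈ Iio γ, B α ∈ I) : ⋂ α ∈ Iio γ, A α ∈ I := by
  refine hI (fun x hx => ?_) (hcomp.union_mem hκ hB (hcomp.biUnion_Iio_mem hγ hN))
  simp only [mem_iInter, mem_union, mem_iUnion, mem_Iio] at hx ⊢
  by_contra! h
  obtain ⟨⟨α, hα, hxB⟩, hxN⟩ := h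
  exact (hAB α hα (hx α hα)).elim hxB (hxN α hα)

theorem LegalIPart.diff_sUnion_mem {X : Set K} {ν : Cardinal.{u}} {W : Set (Set K)}
    (hW : LegalIPart I X ν W) (hempty : ∅ ∈ I) : X \ ⋃₀ W ∈ I := by
  by_contra h
  obtain ⟨w, hw, hpos⟩ := hW.2.2.2 _ sdiff_subset h
  exact hpos ((disjoint_sUnion_right.mp disjoint_sdiff_left w hw).inter_eq ▸ hempty)

theorem LegalDisjoint.legalIPart_sep (hcomp : UnionClosedBelow I κ) (hI : IsLowerSet I)
    (hempty : ∅ ∈ I) {X : Set K} {ν : Cardinal.{u}} (hν : ν < κ) {W : Set (Set K)}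
    (hW : LegalDisjoint X ν W) : LegalIPart I X ν {w ∈ W | w ∉ I} := by
  obtain ⟨hcard, hdisj, rfl⟩ := hW
  refine ⟨(mk_le_mk_of_subset (sep_subset _ _)).trans hcard,
    fun A hA => ⟨subset_sUnion_of_mem hA.1, hA.2⟩,
    fun A hA B hB hAB => (hdisj A hA.1 B hB.1 hAB).inter_eq ▸ hempty, fun Z hZ hZI => ?_⟩
  by_contra! hnull
  refine hZI ?_
  have hZ_eq : Z = ⋃₀ ((Z ∩ ·) '' W) := by
    rw [sUnion_image, ← inter_iUnion₂, ← sUnion_eq_biUnion, inter_eq_left.mpr hZ]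
  rw [hZ_eq]
  refine hcomp.sUnion_mem (mk_image_le.trans_lt (hcard.trans_lt hν)) ?_
  rintro _ ⟨w, hw, rfl⟩
  by_cases hwI : w ∈ I
  · exact hI inter_subset_right hwI
  · exact hnull w ⟨hw, hwI⟩

noncomputable def pieceOf (W : Set (Set K)) (x : K) : Set K :=
  Classical.epsilon fun w => w ∈ W ∧ (x ∈ ⋃₀ W → x ∈ w)

theorem pieceOf_spec {W : Set (Set K)} (hW : W.Nonempty) (x : K) :
    pieceOf W x ∈ W ∧ (x ∈ ⋃₀ W → x ∈ pieceOf W x) := by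
  refine Classical.epsilon_spec (p := fun w => w ∈ W ∧ (x ∈ ⋃₀ W → x ∈ w)) ?_
  by_cases hx : x ∈ ⋃₀ W
  · obtain ⟨w, hw, hxw⟩ := hx
    exact ⟨w, hw, fun _ => hxw⟩
  · exact ⟨hW.some, hW.some_mem, fun h => absurd h hx⟩

def cell (X : Set K) (W : Set (Set K)) (w : Set K) : Set K := {x ∈ X | pieceOf W x = w}

theorem cell_subset (X : Set K) (W : Set (Set K)) (w : Set K) :
    cell X W w ⊆ w ∪ (X \ ⋃₀ W) := by
  rintro x ⟨hx, rfl⟩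
  by_cases hxW : x ∈ ⋃₀ W
  · exact Or.inl ((pieceOf_spec ⟨_, hxW.choose_spec.1⟩ x).2 hxW)
  · exact Or.inr ⟨hx, hxW⟩

/-- The full disjointification of `W`, without well-ordering `W`: each point of `X` goes
into the cell of some member of `W` containing it, or of an arbitrary member if none does. -/
noncomputable def disjointify (X : Set K) (W : Set (Set K)) : Set (Set K) := cell X W '' W

theorem LegalIPart.legalDisjoint_disjointify {X : Set K} {ν : Cardinal.{u}} {W : Set (Set K)}
    (hW : LegalIPart I X ν W) (hX : X ∉ I) : LegalDisjoint X ν (disjointify X W) := by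
  have hne : W.Nonempty := by
    obtain ⟨w, hw, -⟩ := hW.2.2.2 X subset_rfl hX
    exact ⟨w, hw⟩
  refine ⟨mk_image_le.trans hW.1, ?_, ?_⟩
  · rintro _ ⟨w, -, rfl⟩ _ ⟨v, -, rfl⟩ hwv
    refine disjoint_left.mpr fun x hxw hxv => hwv ?_
    rw [← hxw.2, hxv.2]
  · refine (sUnion_subset ?_).antisymm fun x hx => ?_
    · rintro _ ⟨w, -, rfl⟩
      exact sep_subset _ _
    · exact ⟨_, mem_image_of_mem _ (pieceOf_spec hne x).1, hx, rfl⟩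

noncomputable def cellLabel (X : Set K) (W : Set (Set K)) (A : Set K) : Set K :=
  Classical.epsilon fun w => w ∈ W ∧ cell X W w = A

theorem cellLabel_spec {X : Set K} {W : Set (Set K)} {A : Set K} (hA : A ∈ disjointify X W) :
    cellLabel X W A ∈ W ∧ cell X W (cellLabel X W A) = A :=
  Classical.epsilon_spec hA

/-- A `Legal` move `W` is simulated by the `Legal'` move `move W`; a reply `A` to the latter
is answered by the reply `back W A` to `W`, which covers `A` up to the null set
`residue W`. -/
structure MoveTranslation (I : Set (Set K)) (Legal Legal' : Set (Set K) → Prop) where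
  move : Set (Set K) → Set (Set K)
  back : Set (Set K) → Set K → Set K
  residue : Set (Set K) → Set K
  legal_move : ∀ W, Legal W → Legal' (move W)
  back_mem : ∀ W, Legal W → ∀ A ∈ move W, back W A ∈ W
  subset_back_union : ∀ W, Legal W → ∀ A ∈ move W, A ⊆ back W A ∪ residue W
  residue_mem : ∀ W, Legal W → residue W ∈ I

def disjointToIPart (hcomp : UnionClosedBelow I κ) (hI : IsLowerSet I) (hempty : ∅ ∈ I)
    (X : Set K) {ν : Cardinal.{u}} (hν : ν < κ) :
    MoveTranslation I (LegalDisjoint X ν) (LegalIPart I X ν) where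
  move W := {w ∈ W | w ∉ I}
  back _ A := A
  residue _ := ∅
  legal_move _ hW := LegalDisjoint.legalIPart_sep hcomp hI hempty hν hW
  back_mem _ _ _ hA := hA.1
  subset_back_union _ _ _ _ := subset_union_left
  residue_mem _ _ := hempty

noncomputable def iPartToDisjoint (hempty : ∅ ∈ I) {X : Set K} (hX : X ∉ I)
    (ν : Cardinal.{u}) : MoveTranslation I (LegalIPart I X ν) (LegalDisjoint X ν) where
  move := disjointify X
  back := cellLabel X
  residue W := X \ ⋃₀ W
  legal_move _ hW := LegalIPart.legalDisjoint_disjointify hW hX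
  back_mem _ _ _ hA := (cellLabel_spec hA).1
  subset_back_union W _ _ hA := (cellLabel_spec hA).2.ge.trans (cell_subset X W _)
  residue_mem _ hW := LegalIPart.diff_sUnion_mem hW hempty

/-- Choose's replies against `σ` obtained by translating back the replies `h` to the
simulating moves; round `α` of it only needs the earlier rounds. -/
noncomputable def simulatedPlay (σ : (Ordinal.{u} → Set K) → Ordinal.{u} → Set (Set K))
    (back : Set (Set K) → Set K → Set K) (h : Ordinal.{u} → Set K) : Ordinal.{u} → Set K :=
  Ordinal.lt_wf.fix fun α play => back (σ (fun β => if hβ : β < α then play β hβ else ∅) α) (h α)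

section SimulatedPlay

variable {σ : (Ordinal.{u} → Set K) → Ordinal.{u} → Set (Set K)}
  {back : Set (Set K) → Set K → Set K}

theorem simulatedPlay_eq
    (hσ : ∀ h h' : Ordinal.{u} → Set K, ∀ α, (∀ β < α, h β = h' β) → σ h α = σ h' α)
    (h : Ordinal.{u} → Set K) (α : Ordinal.{u}) :
    simulatedPlay σ back h α = back (σ (simulatedPlay σ back h) α) (h α) := by
  rw [simulatedPlay, WellFounded.fix_eq]
  exact congrArg (back · (h α)) (hσ _ _ α fun β hβ => dif_pos hβ)

theorem simulatedPlay_congr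
    (hσ : ∀ h h' : Ordinal.{u} → Set K, ∀ α, (∀ β < α, h β = h' β) → σ h α = σ h' α)
    {h h' : Ordinal.{u} → Set K} {α : Ordinal.{u}} (hh : ∀ β < α, h β = h' β) :
    ∀ β < α, simulatedPlay σ back h β = simulatedPlay σ back h' β := by
  intro β
  induction β using WellFoundedLT.induction with
  | _ β ih =>
    intro hβ
    rw [simulatedPlay_eq hσ, simulatedPlay_eq hσ, hh β hβ,
      hσ _ _ β fun δ hδ => ih δ hδ (hδ.trans hβ)]

end SimulatedPlay

namespace MoveTranslation

variable {Legal Legal' : Set (Set K) → Prop} {γ : Ordinal.{u}}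

theorem cutWinsFam (T : MoveTranslation I Legal Legal') (hcomp : UnionClosedBelow I κ)
    (hI : IsLowerSet I) (hκ : ℵ₀ < κ) (hγ : γ.card < κ) :
    CutWinsFam I γ Legal → CutWinsFam I γ Legal' := by
  rintro ⟨σ, hσ_causal, hσ_legal, hσ_wins⟩
  let play := simulatedPlay σ T.back
  refine ⟨fun h α => T.move (σ (play h) α), fun h h' α hh => ?_,
    fun h α hα => T.legal_move _ (hσ_legal _ α hα), fun h hh => ?_⟩
  · exact congrArg T.move (hσ_causal _ _ α (simulatedPlay_congr hσ_causal hh))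
  · have hplay : ∀ α, play h α = T.back (σ (play h) α) (h α) := simulatedPlay_eq hσ_causal h
    refine hcomp.biInter_mem_of_subset_union hI hκ hγ
      (fun α hα => T.residue_mem _ (hσ_legal _ α hα))
      (fun α hα => hplay α ▸ T.subset_back_union _ (hσ_legal _ α hα) _ (hh α hα)) ?_
    exact hσ_wins _ fun α hα => hplay α ▸ T.back_mem _ (hσ_legal _ α hα) _ (hh α hα)

theorem chooseWinsFam (T : MoveTranslation I Legal Legal') (hcomp : UnionClosedBelow I κ)
    (hI : IsLowerSet I) (hκ : ℵ₀ < κ) (hγ : γ.card < κ) :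
    ChooseWinsFam I γ Legal' → ChooseWinsFam I γ Legal := by
  rintro ⟨τ, hτ_causal, hτ_wins⟩
  refine ⟨fun W α => T.back (W α) (τ (T.move ∘ W) α), fun W W' α hWW' => ?_, fun W hW => ?_⟩
  · dsimp only
    rw [hτ_causal (T.move ∘ W) (T.move ∘ W') α fun β hβ => congrArg T.move (hWW' β hβ),
      hWW' α le_rfl]
  · obtain ⟨hmem, hpos⟩ := hτ_wins (T.move ∘ W) fun α hα => T.legal_move _ (hW α hα)
    refine ⟨fun α hα => T.back_mem _ (hW α hα) _ (hmem α hα), fun hnull => hpos ?_⟩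
    exact hcomp.biInter_mem_of_subset_union hI hκ hγ (fun α hα => T.residue_mem _ (hW α hα))
      (fun α hα => T.subset_back_union _ (hW α hα) _ (hmem α hα)) hnull

end MoveTranslation

end CutChoose

theorem stmt14_general {K : Type u}
    (hunc : ℵ₀ < #K)
    (I : Set (Set K))
    (hmono : ∀ A ∈ I, ∀ B, B ⊆ A → B ∈ I)
    (hempty : (∅ : Set K) ∈ I)
    (hcomp : ∀ (ι : Type u), #ι < #K → ∀ A : ι → Set K,
      (∀ i, A i ∈ I) → (⋃ i, A i) ∈ I)
    (γ : Ordinal.{u}) (hγκ : γ < (#K).ord)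
    (ν : Cardinal.{u}) (hν : ν < #K)
    (X : Set K) (hX : X ∉ I) :
    (CutWinsFam I γ (LegalDisjoint X ν) ↔ CutWinsFam I γ (LegalIPart I X ν)) ∧
    (ChooseWinsFam I γ (LegalDisjoint X ν) ↔ ChooseWinsFam I γ (LegalIPart I X ν)) := by
  have hI : IsLowerSet I := fun _ B hBA hA => hmono _ hA B hBA
  have hγ : γ.card < #K := lt_ord.mp hγκ
  let toIPart := CutChoose.disjointToIPart hcomp hI hempty X hν
  let toDisjoint := CutChoose.iPartToDisjoint hempty hX ν
  exact ⟨⟨toIPart.cutWinsFam hcomp hI hunc hγ, toDisjoint.cutWinsFam hcomp hI hunc hγ⟩,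
    ⟨toDisjoint.chooseWinsFam hcomp hI hunc hγ, toIPart.chooseWinsFam hcomp hI hunc hγ⟩⟩

/-- Let `κ` be regular uncountable, `I` a `<κ`-complete ideal on `κ` extending the
bounded ideal, `γ < κ` a limit ordinal, and `ν < κ` a cardinal.  Then the games
`𝒰_ν(X, I, γ)` (disjoint partitions into at most `ν` pieces) and `𝒢_ν(X, I, γ)`
(`I`-partitions of size at most `ν`) are equivalent: Cut wins one iff Cut wins the
other, and Choose wins one iff Choose wins the other. -/
theorem stmt14 {K : Type u} [LinearOrder K] [IsWellOrder K (· < ·)]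
    (hreg : (#K).IsRegular) (hunc : ℵ₀ < #K)
    (I : Set (Set K))
    (hmono : ∀ A ∈ I, ∀ B, B ⊆ A → B ∈ I)
    (hempty : (∅ : Set K) ∈ I) (hproper : (Set.univ : Set K) ∉ I)
    (hbd : ∀ A : Set K, (∃ b : K, ∀ x ∈ A, x < b) → A ∈ I)
    (hcomp : ∀ (ι : Type u), #ι < #K → ∀ A : ι → Set K,
      (∀ i, A i ∈ I) → (⋃ i, A i) ∈ I)
    (γ : Ordinal.{u}) (hγ : Order.IsSuccLimit γ) (hγκ : γ < (#K).ord)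
    (ν : Cardinal.{u}) (hν : ν < #K)
    (X : Set K) (hX : X ∉ I) :
    (CutWinsFam I γ (LegalDisjoint X ν) ↔ CutWinsFam I γ (LegalIPart I X ν)) ∧
    (ChooseWinsFam I γ (LegalDisjoint X ν) ↔ ChooseWinsFam I γ (LegalIPart I X ν)) :=
  stmt14_general hunc I hmono hempty hcomp γ hγκ ν hν X hX
end

section
/- Let Q be a poset, γ a limit ordinal, and X ∈ Q. If Q is (γ,∞)-distributive with respect to X, then Cut does not have a winning strategy in the game G_∞(X, Q, γ). -/
open Cardinal Set

universe u

/-- `W` is a maximal antichain of the poset `Q` below `X`. -/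
def IsMaxAntichainBelow {Q : Type u} [PartialOrder Q] (X : Q) (W : Set Q) : Prop :=
  (∀ a ∈ W, a ≤ X) ∧
  (∀ a ∈ W, ∀ b ∈ W, a ≠ b → ¬ ∃ r, r ≤ a ∧ r ≤ b) ∧
  ∀ q : Q, q ≤ X → ∃ a ∈ W, ∃ r, r ≤ q ∧ r ≤ a

/-- Cut has a winning strategy in the poset game of length `γ`: each round Cut plays a
set of conditions satisfying `Legal` (e.g. a maximal antichain below `X` of bounded
size), Choose picks an element, and Choose wins iff their choices have a lower bound. -/
def CutWinsPoset {Q : Type u} [PartialOrder Q] (γ : Ordinal.{u})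
    (Legal : Set Q → Prop) : Prop :=
  ∃ σ : (Ordinal.{u} → Q) → Ordinal.{u} → Set Q,
    (∀ h h' : Ordinal.{u} → Q, ∀ α : Ordinal.{u},
      (∀ β < α, h β = h' β) → σ h α = σ h' α) ∧
    (∀ h : Ordinal.{u} → Q, ∀ α < γ, Legal (σ h α)) ∧
    ∀ h : Ordinal.{u} → Q, (∀ α < γ, h α ∈ σ h α) → ¬ ∃ b, ∀ α < γ, b ≤ h α

/-- Choose has a winning strategy in the poset game of length `γ`. -/
def ChooseWinsPoset {Q : Type u} [PartialOrder Q] (γ : Ordinal.{u})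
    (Legal : Set Q → Prop) : Prop :=
  ∃ τ : (Ordinal.{u} → Set Q) → Ordinal.{u} → Q,
    (∀ W W' : Ordinal.{u} → Set Q, ∀ α : Ordinal.{u},
      (∀ β ≤ α, W β = W' β) → τ W α = τ W' α) ∧
    ∀ W : Ordinal.{u} → Set Q, (∀ α < γ, Legal (W α)) →
      (∀ α < γ, τ W α ∈ W α) ∧ ∃ b, ∀ α < γ, b ≤ τ W α

/-!
Suppose `σ` were a winning strategy for Cut, and let `P α` be the set of conditions lying below
every move of some play of length `α` against `σ`. For each `α` choose a maximal antichain `W α`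
below `X` each of whose members either lies in `P (α + 1)` or is incompatible with all of
`P (α + 1)`, and let `b` be a lower bound of a branch through `⟨W α⟩`. Then `b ∈ P α` for all
`α ≤ γ`, by induction: if `b ∈ P β`, then `b` has an extension in `P (β + 1)`, so the branch point
above `b` lies in `P (β + 1)` and hence so does `b`; and plays with the common lower bound `b` pass
through the same antichain elements, so the plays witnessing `b ∈ P (β + 1)` for `β < α` cohere
into one play of length `α`. A play of length `γ` below which `b` lies is won by Choose.
-/

theorem exists_maximal_pairwise_subset {α : Type*} (r : α → α → Prop) (S : Set α) :
    ∃ A, Maximal (fun A => A ⊆ S ∧ A.Pairwise r) A := by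
  refine zorn_subset _ fun c hcS hc => ⟨⋃₀ c, ⟨?_, ?_⟩, fun _ => subset_sUnion_of_mem⟩
  · exact sUnion_subset fun A hA => (hcS hA).1
  · exact hc.pairwise_sUnion.2 fun A hA => (hcS hA).2

section

variable {Q : Type u} [PartialOrder Q]

theorem exists_isMaxAntichainBelow_subset (X : Q) {S : Set Q} (hSX : ∀ s ∈ S, s ≤ X)
    (hS : ∀ q ≤ X, ∃ s ∈ S, s ≤ q) : ∃ W ⊆ S, IsMaxAntichainBelow X W := by
  obtain ⟨W, hW⟩ := exists_maximal_pairwise_subset (fun a b => ¬ ∃ r, r ≤ a ∧ r ≤ b) S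
  refine ⟨W, hW.1.1, fun a ha => hSX a (hW.1.1 ha), fun a ha b hb => hW.1.2 ha hb, ?_⟩
  intro q hq
  obtain ⟨s, hsS, hsq⟩ := hS q hq
  by_contra! hincomp
  have hsW : s ∈ W := by
    refine hW.mem_of_prop_insert ⟨insert_subset hsS hW.1.1, pairwise_insert.2 ⟨hW.1.2, ?_⟩⟩
    exact fun a ha _ => ⟨fun ⟨r, hrs, hra⟩ => hincomp a ha r (hrs.trans hsq) hra,
      fun ⟨r, hra, hrs⟩ => hincomp a ha r (hrs.trans hsq) hra⟩
  exact hincomp s hsW s hsq le_rfl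

theorem exists_isMaxAntichainBelow_decides (X : Q) {D : Set Q} (hD : IsLowerSet D) :
    ∃ W, IsMaxAntichainBelow X W ∧
      ∀ w ∈ W, w ∈ D ∨ ∀ d ∈ D, ¬ ∃ r, r ≤ w ∧ r ≤ d := by
  obtain ⟨W, hWS, hW⟩ := exists_isMaxAntichainBelow_subset X
    (S := {q | q ≤ X ∧ (q ∈ D ∨ ∀ d ∈ D, ¬ ∃ r, r ≤ q ∧ r ≤ d)}) (fun _ hs => hs.1) <| by
      intro q hq
      by_cases hcompat : ∃ d ∈ D, ∃ r, r ≤ q ∧ r ≤ d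
      · obtain ⟨d, hd, r, hrq, hrd⟩ := hcompat
        exact ⟨r, ⟨hrq.trans hq, .inl (hD hrd hd)⟩, hrq⟩
      · exact ⟨q, ⟨hq, .inr fun d hd hqd => hcompat ⟨d, hd, hqd⟩⟩, le_rfl⟩
  exact ⟨W, hW, fun w hw => (hWS hw).2⟩

def DependsOnlyOnPast (σ : (Ordinal.{u} → Q) → Ordinal.{u} → Set Q) : Prop :=
  ∀ h h' : Ordinal.{u} → Q, ∀ α, (∀ β < α, h β = h' β) → σ h α = σ h' α

def IsPlayAbove (σ : (Ordinal.{u} → Q) → Ordinal.{u} → Set Q) (r : Q) (α : Ordinal.{u})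
    (h : Ordinal.{u} → Q) : Prop :=
  ∀ β < α, h β ∈ σ h β ∧ r ≤ h β

def playLowerBounds (σ : (Ordinal.{u} → Q) → Ordinal.{u} → Set Q) (α : Ordinal.{u}) : Set Q :=
  {r | ∃ h, IsPlayAbove σ r α h}

variable {σ : (Ordinal.{u} → Q) → Ordinal.{u} → Set Q} {γ α : Ordinal.{u}} {X b : Q}

theorem isLowerSet_playLowerBounds (σ : (Ordinal.{u} → Q) → Ordinal.{u} → Set Q)
    (α : Ordinal.{u}) : IsLowerSet (playLowerBounds σ α) :=
  fun _ _ hrs ⟨h, hh⟩ => ⟨h, fun β hβ => ⟨(hh β hβ).1, hrs.trans (hh β hβ).2⟩⟩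

theorem IsPlayAbove.eq_of_lt (hσ : DependsOnlyOnPast σ)
    (hlegal : ∀ h : Ordinal.{u} → Q, ∀ α < γ, IsMaxAntichainBelow X (σ h α))
    {α' : Ordinal.{u}} {h h' : Ordinal.{u} → Q} (hh : IsPlayAbove σ b α h) (hh' : IsPlayAbove σ b α' h') :
    ∀ β < γ, β < α → β < α' → h β = h' β := by
  intro β
  induction β using WellFoundedLT.induction with | ind β ih => ?_
  intro hβγ hβα hβα'
  have hσβ : σ h β = σ h' β :=
    hσ h h' β fun δ hδ => ih δ hδ (hδ.trans hβγ) (hδ.trans hβα) (hδ.trans hβα')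
  by_contra hne
  exact (hlegal h β hβγ).2.1 _ (hh β hβα).1 _ (hσβ ▸ (hh' β hβα').1) hne
    ⟨b, (hh β hβα).2, (hh' β hβα').2⟩

theorem exists_le_mem_playLowerBounds_succ
    (hσ : DependsOnlyOnPast σ)
    (hlegal : ∀ h : Ordinal.{u} → Q, ∀ α < γ, IsMaxAntichainBelow X (σ h α))
    {r : Q} (hα : α < γ) (hrX : r ≤ X) (hr : r ∈ playLowerBounds σ α) :
    ∃ t ≤ r, t ∈ playLowerBounds σ (Order.succ α) := by
  obtain ⟨h, hh⟩ := hr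
  obtain ⟨a, ha, t, htr, hta⟩ := (hlegal h α hα).2.2 r hrX
  have hσα : σ (Function.update h α a) α = σ h α :=
    hσ _ _ α fun β hβ => Function.update_of_ne hβ.ne _ _
  refine ⟨t, htr, Function.update h α a, fun β hβ => ?_⟩
  rcases (Order.lt_succ_iff.1 hβ).lt_or_eq with hβα | rfl
  · have hσβ : σ (Function.update h α a) β = σ h β :=
      hσ _ _ β fun δ hδ => Function.update_of_ne (hδ.trans hβα).ne _ _
    rw [Function.update_of_ne hβα.ne, hσβ]
    exact ⟨(hh β hβα).1, htr.trans (hh β hβα).2⟩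
  · rw [Function.update_self, hσα]
    exact ⟨ha, hta⟩

theorem mem_playLowerBounds_of_forall_lt_succ
    (hσ : DependsOnlyOnPast σ)
    (hlegal : ∀ h : Ordinal.{u} → Q, ∀ α < γ, IsMaxAntichainBelow X (σ h α))
    (hαγ : α ≤ γ) (hb : ∀ β < α, b ∈ playLowerBounds σ (Order.succ β)) :
    b ∈ playLowerBounds σ α := by
  choose k hk using fun β (hβ : β < α) => hb β hβ
  let H : Ordinal.{u} → Q := fun β => if hβ : β < α then k β hβ β else b
  have hH : ∀ β (hβ : β < α), ∀ δ < β, H δ = k β hβ δ := fun β hβ δ hδ => by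
    simp only [H, dif_pos (hδ.trans hβ)]
    exact (hk δ _).eq_of_lt hσ hlegal (hk β hβ) δ (hδ.trans (hβ.trans_le hαγ))
      (Order.lt_succ δ) (hδ.trans (Order.lt_succ β))
  refine ⟨H, fun β hβ => ?_⟩
  rw [show H β = k β hβ β from dif_pos hβ, hσ H (k β hβ) β (hH β hβ)]
  exact hk β hβ β (Order.lt_succ β)

end

theorem stmt17_general {Q : Type u} [PartialOrder Q]
    (γ : Ordinal.{u}) (X : Q)
    (hdist : ∀ W : Ordinal.{u} → Set Q,
      (∀ α < γ, IsMaxAntichainBelow X (W α)) →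
      ∃ g : Ordinal.{u} → Q, (∀ α < γ, g α ∈ W α) ∧ ∃ b, ∀ α < γ, b ≤ g α) :
    ¬ CutWinsPoset γ (fun W => IsMaxAntichainBelow X W) := by
  rintro ⟨σ, hσ, hlegal, hwin⟩
  choose W hW hWdecides using fun α : Ordinal.{u} =>
    exists_isMaxAntichainBelow_decides X (isLowerSet_playLowerBounds σ (Order.succ α))
  obtain ⟨g, hgW, b, hbg⟩ := hdist W fun α _ => hW α
  have hb : ∀ α ≤ γ, b ∈ playLowerBounds σ α := by
    intro α
    induction α using WellFoundedLT.induction with | ind α ih => ?_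
    intro hαγ
    refine mem_playLowerBounds_of_forall_lt_succ hσ hlegal hαγ fun β hβ => ?_
    have hβγ := hβ.trans_le hαγ
    have hbX : b ≤ X := (hbg β hβγ).trans ((hW β).1 _ (hgW β hβγ))
    obtain ⟨t, htb, ht⟩ :=
      exists_le_mem_playLowerBounds_succ hσ hlegal hβγ hbX (ih β hβ hβγ.le)
    rcases hWdecides β _ (hgW β hβγ) with hg | hg
    · exact isLowerSet_playLowerBounds σ _ (hbg β hβγ) hg
    · exact absurd ⟨t, htb.trans (hbg β hβγ), le_rfl⟩ (hg t ht)
  obtain ⟨h, hh⟩ := hb γ le_rfl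
  exact hwin h (fun α hα => (hh α hα).1) ⟨b, fun α hα => (hh α hα).2⟩

/-- Let `Q` be a poset, `γ` a limit ordinal, and `X ∈ Q`.  If `Q` is
`(γ,∞)`-distributive with respect to `X` (every `γ`-sequence of maximal antichains of
`Q` below `X` of arbitrary size admits a positive branch), then Cut does not have a
winning strategy in the game `𝒢_∞(X, Q, γ)`. -/
theorem stmt17 {Q : Type u} [PartialOrder Q]
    (γ : Ordinal.{u}) (hγ : Order.IsSuccLimit γ) (X : Q)
    (hdist : ∀ W : Ordinal.{u} → Set Q,
      (∀ α < γ, IsMaxAntichainBelow X (W α)) →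
      ∃ g : Ordinal.{u} → Q, (∀ α < γ, g α ∈ W α) ∧ ∃ b, ∀ α < γ, b ≤ g α) :
    ¬ CutWinsPoset γ (fun W => IsMaxAntichainBelow X W) :=
  stmt17_general γ X hdist
end

section
/- Let κ be regular uncountable, I an ideal on κ, and γ < κ a limit ordinal. Then Empty has a winning strategy in the Banach–Mazur game B(I,γ) if and only if Cut has a winning strategy in the game G_∞(X, I, ≤γ) for some X ∈ I⁺. -/
/-!
Empty to Cut: let `X` be the opening move of Empty's winning strategy `σ`. At a Nonempty stage,
Cut plays an `I`-partition of `X` extending a maximal almost disjoint family of `σ`'s legal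
answers below the current position. That family is dense below the position, so a pick of Choose
outside it would make the next partial intersection `I`-small. Hence, as long as Choose keeps the
partial intersections positive, each pick is `σ`'s answer to some move of Nonempty, and the picks
replay a run following `σ` whose intersection contains that of the picks. Empty wins that run, so
Choose loses.

Cut to Empty: Empty answers the current set `T` by `T ∩ w`, where `w` is a piece of Cut's current
partition meeting `T` in a positive set. The pieces form a play of Choose against Cut's strategy
whose partial intersections contain the Banach–Mazur moves, so a nonempty intersection of the
Banach–Mazur run would be a win for Choose.
-/

open Cardinal Set

universe u

/-- It is Empty's turn at stage `α` of the Banach–Mazur game: Empty starts at `0`,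
players alternate, and Nonempty moves first at each limit stage. -/
def emptyTurn (α : Ordinal.{u}) : Prop :=
  (∃ n : ℕ, α = (n : Ordinal.{u}) ∧ Even n) ∨
  (∃ β : Ordinal.{u}, ∃ n : ℕ, Order.IsSuccLimit β ∧ α = β + (n : Ordinal.{u}) ∧ Odd n)

/-- The run `s` of the Banach–Mazur game for the family `I` is valid below `α`:
every move so far is `I`-positive and contained in all earlier moves. -/
def BMValid {K : Type u} (I : Set (Set K)) (s : Ordinal.{u} → Set K)
    (α : Ordinal.{u}) : Prop :=
  ∀ β < α, s β ∉ I ∧ ∀ β' < β, s β ⊆ s β'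

/-- `A` is a legal move at stage `α` of the run `s`: `I`-positive and contained in all
earlier moves. -/
def BMLegal {K : Type u} (I : Set (Set K)) (s : Ordinal.{u} → Set K)
    (α : Ordinal.{u}) (A : Set K) : Prop :=
  A ∉ I ∧ ∀ β < α, A ⊆ s β

/-- Empty has a winning strategy in the Banach–Mazur game `ℬ(I,γ)`: a coherent strategy
`σ` such that, in any run following `σ` in which Nonempty plays legally whenever the
position is valid, `σ`'s own moves are legal and it is not the case that the run is fully
valid with nonempty intersection. -/
def EmptyWinsBM {K : Type u} (I : Set (Set K)) (γ : Ordinal.{u}) : Prop :=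
  ∃ σ : (Ordinal.{u} → Set K) → Ordinal.{u} → Set K,
    (∀ s s' : Ordinal.{u} → Set K, ∀ α : Ordinal.{u},
      (∀ β < α, s β = s' β) → σ s α = σ s' α) ∧
    ∀ s : Ordinal.{u} → Set K,
      (∀ α < γ, emptyTurn α → s α = σ s α) →
      (∀ α < γ, ¬ emptyTurn α → BMValid I s α → BMLegal I s α (s α)) →
      (∀ α < γ, emptyTurn α → BMValid I s α → BMLegal I s α (s α)) ∧
      ¬ (BMValid I s γ ∧ (⋂ α ∈ Set.Iio γ, s α).Nonempty)

/-- Nonempty has a winning strategy in the Banach–Mazur game `ℬ(I,γ)`: a coherent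
strategy `τ` such that, in any run following `τ` in which Empty plays legally whenever
the position is valid, `τ`'s own moves are legal, the run is fully valid, and the final
intersection is nonempty. -/
def NonemptyWinsBM {K : Type u} (I : Set (Set K)) (γ : Ordinal.{u}) : Prop :=
  ∃ τ : (Ordinal.{u} → Set K) → Ordinal.{u} → Set K,
    (∀ s s' : Ordinal.{u} → Set K, ∀ α : Ordinal.{u},
      (∀ β < α, s β = s' β) → τ s α = τ s' α) ∧
    ∀ s : Ordinal.{u} → Set K,
      (∀ α < γ, ¬ emptyTurn α → s α = τ s α) →
      (∀ α < γ, emptyTurn α → BMValid I s α → BMLegal I s α (s α)) →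
      (∀ α < γ, ¬ emptyTurn α → BMValid I s α → BMLegal I s α (s α)) ∧
      BMValid I s γ ∧ (⋂ α ∈ Set.Iio γ, s α).Nonempty

/-- `W` is an `I`-partition of `X`: a maximal family of `I`-positive subsets of `X` with
pairwise intersections in `I`. -/
def IPartition {K : Type u} (I : Set (Set K)) (X : Set K) (W : Set (Set K)) : Prop :=
  (∀ A ∈ W, A ⊆ X ∧ A ∉ I) ∧ (∀ A ∈ W, ∀ B ∈ W, A ≠ B → A ∩ B ∈ I) ∧
    ∀ Z : Set K, Z ⊆ X → Z ∉ I → ∃ w ∈ W, Z ∩ w ∉ I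

/-- Cut has a winning strategy in the game `𝒢_∞(X, I, ≤γ)`: each round Cut plays an
`I`-partition of `X` of arbitrary size and Choose picks an element; Choose wins iff all
intersections of fewer than `γ`-many choices are `I`-positive and the intersection of
all `γ`-many choices is nonempty. -/
def CutWinsLeq {K : Type u} (I : Set (Set K)) (X : Set K) (γ : Ordinal.{u}) : Prop :=
  ∃ σ : (Ordinal.{u} → Set K) → Ordinal.{u} → Set (Set K),
    (∀ h h' : Ordinal.{u} → Set K, ∀ α : Ordinal.{u},
      (∀ β < α, h β = h' β) → σ h α = σ h' α) ∧
    (∀ h : Ordinal.{u} → Set K, ∀ α < γ, IPartition I X (σ h α)) ∧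
    ∀ h : Ordinal.{u} → Set K, (∀ α < γ, h α ∈ σ h α) →
      ¬ ((∀ δ < γ, (⋂ β ∈ Set.Iio δ, h β) ∉ I) ∧ (⋂ β ∈ Set.Iio γ, h β).Nonempty)

/-- Choose has a winning strategy in the game `𝒢_∞(X, I, ≤γ)`. -/
def ChooseWinsLeq {K : Type u} (I : Set (Set K)) (X : Set K) (γ : Ordinal.{u}) : Prop :=
  ∃ τ : (Ordinal.{u} → Set (Set K)) → Ordinal.{u} → Set K,
    (∀ W W' : Ordinal.{u} → Set (Set K), ∀ α : Ordinal.{u},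
      (∀ β ≤ α, W β = W' β) → τ W α = τ W' α) ∧
    ∀ W : Ordinal.{u} → Set (Set K), (∀ α < γ, IPartition I X (W α)) →
      (∀ α < γ, τ W α ∈ W α) ∧ (∀ δ < γ, (⋂ β ∈ Set.Iio δ, τ W β) ∉ I) ∧
      (⋂ β ∈ Set.Iio γ, τ W β).Nonempty


open Ordinal Order

namespace Ordinal

theorem omega0_mul_add_natCast_inj {q q' : Ordinal.{u}} {n n' : ℕ}
    (h : ω * q + n = ω * q' + n') : q = q' ∧ n = n' := by
  have hdiv : ∀ (q : Ordinal.{u}) (n : ℕ), (ω * q + n) / ω = q := fun q n => by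
    rw [mul_add_div _ omega0_ne_zero, div_eq_zero_of_lt (natCast_lt_omega0 n), add_zero]
  have hmod : ∀ (q : Ordinal.{u}) (n : ℕ), (ω * q + n) % ω = n := fun q n => by
    rw [mul_add_mod_self, mod_eq_of_lt (natCast_lt_omega0 n)]
  refine ⟨by rw [← hdiv q n, h, hdiv], ?_⟩
  exact_mod_cast (hmod q n).symm.trans (h ▸ hmod q' n')

theorem exists_omega0_mul_add_natCast (α : Ordinal.{u}) :
    ∃ (q : Ordinal.{u}) (n : ℕ), α = ω * q + n := by
  obtain ⟨n, hn⟩ := lt_omega0.1 (mod_lt α omega0_ne_zero)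
  exact ⟨α / ω, n, by rw [← hn, div_add_mod]⟩

theorem isSuccLimit_iff_exists_omega0_mul {β : Ordinal.{u}} :
    IsSuccLimit β ↔ ∃ q ≠ 0, β = ω * q := by
  rw [isSuccLimit_iff, isSuccPrelimit_iff_omega0_dvd]
  constructor
  · rintro ⟨hβ, q, rfl⟩
    exact ⟨q, by rintro rfl; simp at hβ, rfl⟩
  · rintro ⟨q, hq, rfl⟩
    exact ⟨mul_ne_zero omega0_ne_zero hq, q, rfl⟩

end Ordinal

theorem emptyTurn_omega0_mul_add_natCast (q : Ordinal.{u}) (n : ℕ) :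
    emptyTurn (ω * q + n) ↔ (q = 0 ↔ Even n) := by
  constructor
  · rintro (⟨m, hm, hev⟩ | ⟨β, m, hβ, hm, hodd⟩)
    · obtain ⟨rfl, rfl⟩ := omega0_mul_add_natCast_inj (q' := 0) (by simpa using hm)
      simpa using hev
    · obtain ⟨q', hq', rfl⟩ := isSuccLimit_iff_exists_omega0_mul.1 hβ
      obtain ⟨rfl, rfl⟩ := omega0_mul_add_natCast_inj hm
      simpa [hq', Nat.not_even_iff_odd] using hodd
  · intro h
    rcases eq_or_ne q 0 with rfl | hq
    · exact Or.inl ⟨n, by simp, h.1 rfl⟩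
    · refine Or.inr ⟨ω * q, n, isSuccLimit_iff_exists_omega0_mul.2 ⟨q, hq, rfl⟩, rfl, ?_⟩
      exact Nat.not_even_iff_odd.1 fun hn => hq (h.2 hn)

theorem emptyTurn_zero : emptyTurn (0 : Ordinal.{u}) := by
  simpa using emptyTurn_omega0_mul_add_natCast (0 : Ordinal.{u}) 0

theorem not_emptyTurn_of_isSuccLimit {β : Ordinal.{u}} (hβ : IsSuccLimit β) : ¬ emptyTurn β := by
  obtain ⟨q, hq, rfl⟩ := isSuccLimit_iff_exists_omega0_mul.1 hβ
  simpa [hq] using emptyTurn_omega0_mul_add_natCast q 0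

theorem emptyTurn_add_one_iff {α : Ordinal.{u}} : emptyTurn (α + 1) ↔ ¬ emptyTurn α := by
  obtain ⟨q, n, rfl⟩ := exists_omega0_mul_add_natCast α
  rw [add_assoc, ← Nat.cast_add_one, emptyTurn_omega0_mul_add_natCast,
    emptyTurn_omega0_mul_add_natCast, Nat.even_add_one]
  tauto

theorem emptyTurn.pred_add_one {α : Ordinal.{u}} (hE : emptyTurn α) (h0 : α ≠ 0) :
    pred α + 1 = α := by
  rcases zero_or_succ_or_isSuccLimit α with rfl | ⟨β, rfl⟩ | hα
  · exact absurd rfl h0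
  · rw [succ_eq_add_one, Ordinal.pred_add_one]
  · exact absurd hE (not_emptyTurn_of_isSuccLimit hα)

theorem emptyTurn.not_emptyTurn_pred {α : Ordinal.{u}} (hE : emptyTurn α) (h0 : α ≠ 0) :
    ¬ emptyTurn (pred α) := by
  rw [← hE.pred_add_one h0, emptyTurn_add_one_iff] at hE
  exact hE

theorem emptyTurn.pred_lt {α : Ordinal.{u}} (hE : emptyTurn α) (h0 : α ≠ 0) : pred α < α :=
  (lt_add_one (pred α)).trans_eq (hE.pred_add_one h0)

def IsCoherent {α β : Type*} (σ : (Ordinal.{u} → α) → Ordinal.{u} → β) : Prop :=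
  ∀ s s' : Ordinal.{u} → α, ∀ a, (∀ b < a, s b = s' b) → σ s a = σ s' a

/-- `EmptyWinsBM I γ` unfolds to `∃ σ, IsCoherent σ ∧ IsWinningForEmpty I γ σ`. -/
def IsWinningForEmpty {K : Type u} (I : Set (Set K)) (γ : Ordinal.{u})
    (σ : (Ordinal.{u} → Set K) → Ordinal.{u} → Set K) : Prop :=
  ∀ s : Ordinal.{u} → Set K,
    (∀ α < γ, emptyTurn α → s α = σ s α) →
    (∀ α < γ, ¬ emptyTurn α → BMValid I s α → BMLegal I s α (s α)) →
    (∀ α < γ, emptyTurn α → BMValid I s α → BMLegal I s α (s α)) ∧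
    ¬ (BMValid I s γ ∧ (⋂ α ∈ Iio γ, s α).Nonempty)

/-- The sequence `s` with `s a = F s a` for all `a`, when `F` is coherent. -/
noncomputable def recSeq {α : Type*} [Inhabited α] (F : (Ordinal.{u} → α) → Ordinal.{u} → α) :
    Ordinal.{u} → α :=
  Ordinal.lt_wf.fix fun a ih => F (fun b => if h : b < a then ih b h else default) a

section recSeq

variable {α : Type*} [Inhabited α] {F F' : (Ordinal.{u} → α) → Ordinal.{u} → α}

theorem recSeq_eq (hF : IsCoherent F) (a : Ordinal.{u}) : recSeq F a = F (recSeq F) a := by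
  rw [recSeq, Ordinal.lt_wf.fix_eq]
  exact hF _ _ a fun b hb => dif_pos hb

theorem recSeq_congr (hF : IsCoherent F) (hF' : IsCoherent F') {a : Ordinal.{u}}
    (h : ∀ b ≤ a, ∀ G, F G b = F' G b) : recSeq F a = recSeq F' a := by
  induction a using WellFoundedLT.induction with
  | _ a ih =>
    rw [recSeq_eq hF, recSeq_eq hF', h a le_rfl]
    exact hF' _ _ a fun b hb => ih b hb fun c hc => h c (hc.trans hb.le)

end recSeq

theorem exists_maximal_pairwise {α : Type*} {r : α → α → Prop} (hr : ∀ a b, r a b → r b a)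
    {S D : Set α} (hSD : S ⊆ D) (hS : S.Pairwise r) :
    ∃ W, S ⊆ W ∧ W ⊆ D ∧ W.Pairwise r ∧ ∀ b ∈ D, b ∉ W → ∃ w ∈ W, ¬ r b w := by
  obtain ⟨W, hSW, hW⟩ := zorn_subset_nonempty {W | W ⊆ D ∧ W.Pairwise r}
    (fun c hc hchain _ => ⟨⋃₀ c, ⟨sUnion_subset fun t ht => (hc ht).1,
      hchain.pairwise_sUnion.2 fun t ht => (hc ht).2⟩, fun _ => subset_sUnion_of_mem⟩) S ⟨hSD, hS⟩
  refine ⟨W, hSW, hW.prop.1, hW.prop.2, fun b hbD hbW => ?_⟩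
  by_contra! hb
  have hins : insert b W ∈ {W | W ⊆ D ∧ W.Pairwise r} :=
    ⟨insert_subset hbD hW.prop.1, hW.prop.2.insert fun w hw _ => ⟨hb w hw, hr _ _ (hb w hw)⟩⟩
  exact hbW (hW.eq_of_subset hins (subset_insert b W) ▸ mem_insert b W)

def IsMaximalAlmostDisjoint {K : Type u} (I : Set (Set K)) (D W : Set (Set K)) : Prop :=
  W ⊆ D ∧ (W.Pairwise fun A B => A ∩ B ∈ I) ∧ ∀ v ∈ D, v ∉ W → ∃ w ∈ W, v ∩ w ∉ I

theorem exists_iPartition_superset {K : Type u} {I : Set (Set K)} {X : Set K} {S : Set (Set K)}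
    (hS : ∀ A ∈ S, A ⊆ X ∧ A ∉ I) (hSI : S.Pairwise fun A B => A ∩ B ∈ I) :
    ∃ W, S ⊆ W ∧ IPartition I X W := by
  obtain ⟨W, hSW, hWD, hWI, hmax⟩ := exists_maximal_pairwise (D := {A | A ⊆ X ∧ A ∉ I})
    (fun A B h => by rwa [inter_comm]) hS hSI
  refine ⟨W, hSW, hWD, hWI, fun Z hZX hZI => ?_⟩
  by_cases hZW : Z ∈ W
  · exact ⟨Z, hZW, by rwa [inter_self]⟩
  · exact hmax Z ⟨hZX, hZI⟩ hZW

section BMCongr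

variable {K : Type u} {I : Set (Set K)} {s s' : Ordinal.{u} → Set K} {α : Ordinal.{u}}

theorem bmLegal_congr (h : ∀ β < α, s β = s' β) {A : Set K} :
    BMLegal I s α A ↔ BMLegal I s' α A := by
  simp only [BMLegal]
  exact and_congr_right' (forall₂_congr fun β hβ => by rw [h β hβ])

theorem bmValid_congr (h : ∀ β < α, s β = s' β) : BMValid I s α ↔ BMValid I s' α :=
  forall₂_congr fun β hβ => by
    rw [h β hβ]
    exact bmLegal_congr fun b hb => h b (hb.trans hβ)

end BMCongr

section CutToEmpty

variable {K : Type u} {I : Set (Set K)} {X : Set K}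
  {σC : (Ordinal.{u} → Set K) → Ordinal.{u} → Set (Set K)}

/-- A member of `P` meeting `T` in an `I`-positive set, if there is one. -/
noncomputable def compatiblePick (I : Set (Set K)) (P : Set (Set K)) (T : Set K) : Set K :=
  Classical.epsilon fun w => w ∈ P ∧ T ∩ w ∉ I

theorem compatiblePick_spec {P : Set (Set K)} {T : Set K} (hP : IPartition I X P) (hTX : T ⊆ X)
    (hT : T ∉ I) : compatiblePick I P T ∈ P ∧ T ∩ compatiblePick I P T ∉ I :=
  Classical.epsilon_spec (hP.2.2 T hTX hT)

open Classical in
/-- The set Choose answers at stage `α` of the run `s`, given Choose's earlier answers `g`: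
Nonempty's move at Nonempty's stages, and at Empty's stages the previous move cut down by the
previous answer. -/
def bmTarget (X : Set K) (s g : Ordinal.{u} → Set K) (α : Ordinal.{u}) : Set K :=
  if emptyTurn α then (if α = 0 then X else s (pred α) ∩ g (pred α)) else s α

noncomputable def chooseAlong (I : Set (Set K)) (X : Set K)
    (σC : (Ordinal.{u} → Set K) → Ordinal.{u} → Set (Set K)) (s : Ordinal.{u} → Set K) :
    Ordinal.{u} → Set K :=
  recSeq fun g α => compatiblePick I (σC g α) (bmTarget X s g α)

open Classical in
def emptyStrategyOfCut (I : Set (Set K)) (X : Set K)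
    (σC : (Ordinal.{u} → Set K) → Ordinal.{u} → Set (Set K)) :
    (Ordinal.{u} → Set K) → Ordinal.{u} → Set K := fun s α =>
  if emptyTurn α then bmTarget X s (chooseAlong I X σC s) α ∩ chooseAlong I X σC s α else ∅

section bmTarget

variable {s g : Ordinal.{u} → Set K} {α : Ordinal.{u}}

theorem bmTarget_zero : bmTarget X s g 0 = X := by
  simp [bmTarget, emptyTurn_zero]

theorem bmTarget_of_emptyTurn (hE : emptyTurn α) (h0 : α ≠ 0) :
    bmTarget X s g α = s (pred α) ∩ g (pred α) := by
  simp [bmTarget, hE, h0]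

theorem bmTarget_of_not_emptyTurn (hN : ¬ emptyTurn α) : bmTarget X s g α = s α := by
  simp [bmTarget, hN]

end bmTarget

theorem emptyStrategyOfCut_of_emptyTurn {s : Ordinal.{u} → Set K} {α : Ordinal.{u}}
    (hE : emptyTurn α) :
    emptyStrategyOfCut I X σC s α =
      bmTarget X s (chooseAlong I X σC s) α ∩ chooseAlong I X σC s α :=
  if_pos hE

theorem subset_chooseAlong_of_bmValid {γ : Ordinal.{u}} {s : Ordinal.{u} → Set K}
    (hs : ∀ α < γ, emptyTurn α → s α = emptyStrategyOfCut I X σC s α) (hval : BMValid I s γ)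
    {β : Ordinal.{u}} (hβγ : β + 1 < γ) : s (β + 1) ⊆ chooseAlong I X σC s β := by
  by_cases hE : emptyTurn β
  · refine ((hval _ hβγ).2 β (lt_add_one β)).trans ?_
    rw [hs β ((lt_add_one β).trans hβγ) hE, emptyStrategyOfCut_of_emptyTurn hE]
    exact inter_subset_right
  · have hE' : emptyTurn (β + 1) := emptyTurn_add_one_iff.2 hE
    rw [hs _ hβγ hE', emptyStrategyOfCut_of_emptyTurn hE',
      bmTarget_of_emptyTurn hE' (lt_add_one β).ne_bot, pred_add_one]
    exact inter_subset_left.trans inter_subset_right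

variable (coh : IsCoherent σC)
include coh

theorem isCoherent_compatiblePick (s : Ordinal.{u} → Set K) :
    IsCoherent fun g α => compatiblePick I (σC g α) (bmTarget X s g α) := by
  intro g g' α h
  have htarget : bmTarget X s g α = bmTarget X s g' α := by
    unfold bmTarget
    split_ifs with hE h0
    · rfl
    · rw [h _ (hE.pred_lt h0)]
    · rfl
  dsimp only
  rw [coh g g' α h, htarget]

theorem chooseAlong_eq (s : Ordinal.{u} → Set K) (α : Ordinal.{u}) :
    chooseAlong I X σC s α =
      compatiblePick I (σC (chooseAlong I X σC s) α) (bmTarget X s (chooseAlong I X σC s) α) :=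
  recSeq_eq (isCoherent_compatiblePick coh s) α

theorem chooseAlong_congr {s s' : Ordinal.{u} → Set K} {α : Ordinal.{u}} (hE : emptyTurn α)
    (h : ∀ β < α, s β = s' β) {β : Ordinal.{u}} (hβ : β ≤ α) :
    chooseAlong I X σC s β = chooseAlong I X σC s' β := by
  refine recSeq_congr (isCoherent_compatiblePick coh s) (isCoherent_compatiblePick coh s')
    fun b hb g => ?_
  unfold bmTarget
  split_ifs with hbE hb0
  · rfl
  · rw [h _ ((hbE.pred_lt hb0).trans_le (hb.trans hβ))]
  · rw [h b ((hb.trans hβ).lt_of_ne fun hbα => hbE (hbα ▸ hE))]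

theorem isCoherent_emptyStrategyOfCut : IsCoherent (emptyStrategyOfCut I X σC) := by
  intro s s' α h
  unfold emptyStrategyOfCut bmTarget
  split_ifs with hE h0
  · rw [chooseAlong_congr coh hE h le_rfl]
  · have hpred := hE.pred_lt h0
    rw [h _ hpred, chooseAlong_congr coh hE h hpred.le, chooseAlong_congr coh hE h le_rfl]
  · rfl

variable {γ : Ordinal.{u}} (part : ∀ h : Ordinal.{u} → Set K, ∀ α < γ, IPartition I X (σC h α))
include part

theorem chooseAlong_compatible {s : Ordinal.{u} → Set K} {α : Ordinal.{u}} (hαγ : α < γ)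
    (hTX : bmTarget X s (chooseAlong I X σC s) α ⊆ X)
    (hT : bmTarget X s (chooseAlong I X σC s) α ∉ I) :
    chooseAlong I X σC s α ∈ σC (chooseAlong I X σC s) α ∧
      bmTarget X s (chooseAlong I X σC s) α ∩ chooseAlong I X σC s α ∉ I := by
  rw [chooseAlong_eq coh]
  exact compatiblePick_spec (part _ α hαγ) hTX hT

theorem bmTarget_subset_and_notMem (hX : X ∉ I) {s : Ordinal.{u} → Set K} {α : Ordinal.{u}}
    (hαγ : α < γ) (hs0 : s 0 ⊆ X) (hval : BMValid I s α)
    (hα : ¬ emptyTurn α → BMLegal I s α (s α)) :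
    bmTarget X s (chooseAlong I X σC s) α ⊆ X ∧ bmTarget X s (chooseAlong I X σC s) α ∉ I := by
  have nonempty_stage : ∀ β ≤ α, ¬ emptyTurn β → BMLegal I s β (s β) →
      bmTarget X s (chooseAlong I X σC s) β ⊆ X ∧ bmTarget X s (chooseAlong I X σC s) β ∉ I := by
    intro β _ hN hleg
    have hβ0 : 0 < β := pos_iff_ne_zero.2 fun h => hN (h ▸ emptyTurn_zero)
    rw [bmTarget_of_not_emptyTurn hN]
    exact ⟨(hleg.2 0 hβ0).trans hs0, hleg.1⟩
  by_cases hE : emptyTurn α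
  · rcases eq_or_ne α 0 with rfl | h0
    · exact ⟨bmTarget_zero.subset, bmTarget_zero (g := chooseAlong I X σC s) ▸ hX⟩
    · have hpred := hE.pred_lt h0
      have hN := hE.not_emptyTurn_pred h0
      obtain ⟨hTX, hT⟩ := nonempty_stage _ hpred.le hN (hval _ hpred)
      have hcompat := (chooseAlong_compatible coh part (hpred.trans hαγ) hTX hT).2
      rw [bmTarget_of_not_emptyTurn hN] at hTX hcompat
      rw [bmTarget_of_emptyTurn hE h0]
      exact ⟨inter_subset_left.trans hTX, hcompat⟩
  · exact nonempty_stage α le_rfl hE (hα hE)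

theorem bmLegal_emptyStrategyOfCut (hX : X ∉ I) {s : Ordinal.{u} → Set K}
    (hs : ∀ α < γ, emptyTurn α → s α = emptyStrategyOfCut I X σC s α) (hs0 : s 0 ⊆ X)
    {α : Ordinal.{u}} (hαγ : α < γ) (hE : emptyTurn α) (hval : BMValid I s α) :
    BMLegal I s α (s α) := by
  obtain ⟨hTX, hT⟩ := bmTarget_subset_and_notMem coh part hX hαγ hs0 hval fun hN => absurd hE hN
  rw [hs α hαγ hE, emptyStrategyOfCut_of_emptyTurn hE]
  refine ⟨(chooseAlong_compatible coh part hαγ hTX hT).2, fun β hβ => ?_⟩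
  have h0 : α ≠ 0 := hβ.ne_bot
  have hβα : β ≤ pred α := by
    rw [← Order.lt_add_one_iff, hE.pred_add_one h0]
    exact hβ
  rw [bmTarget_of_emptyTurn hE h0]
  refine inter_subset_left.trans (inter_subset_left.trans ?_)
  rcases hβα.eq_or_lt with rfl | hlt
  · exact subset_rfl
  · exact (hval _ (hE.pred_lt h0)).2 β hlt

theorem isWinningForEmpty_emptyStrategyOfCut (hmono : ∀ A ∈ I, ∀ B, B ⊆ A → B ∈ I)
    (hX : X ∉ I) (hγ : IsSuccLimit γ)
    (win : ∀ h : Ordinal.{u} → Set K, (∀ α < γ, h α ∈ σC h α) →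
      ¬ ((∀ δ < γ, (⋂ β ∈ Iio δ, h β) ∉ I) ∧ (⋂ β ∈ Iio γ, h β).Nonempty)) :
    IsWinningForEmpty I γ (emptyStrategyOfCut I X σC) := by
  intro s hs _
  have hs0 : s 0 ⊆ X := by
    rw [hs 0 hγ.bot_lt emptyTurn_zero, emptyStrategyOfCut_of_emptyTurn emptyTurn_zero,
      bmTarget_zero]
    exact inter_subset_left
  refine ⟨fun α hαγ hE hval => bmLegal_emptyStrategyOfCut coh part hX hs hs0 hαγ hE hval,
    fun ⟨hval, x, hx⟩ => ?_⟩
  have hstep := fun β (hβ : β < γ) => subset_chooseAlong_of_bmValid hs hval (hγ.add_one_lt hβ)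
  have hsub : ∀ δ < γ, s δ ⊆ ⋂ β ∈ Iio δ, chooseAlong I X σC s β := fun δ hδ =>
    subset_iInter₂ fun β (hβ : β < δ) => by
      refine subset_trans ?_ (hstep β (hβ.trans hδ))
      rcases (Order.add_one_le_iff.2 hβ).eq_or_lt with h | h
      · rw [h]
      · exact (hval δ hδ).2 _ h
  refine win _ (fun α hα => ?_) ⟨fun δ hδ hI => (hval δ hδ).1 (hmono _ hI _ (hsub δ hδ)), x, ?_⟩
  · obtain ⟨hTX, hT⟩ := bmTarget_subset_and_notMem coh part hX hα hs0
      (fun β hβ => hval β (hβ.trans hα)) fun _ => hval α hα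
    exact (chooseAlong_compatible coh part hα hTX hT).1
  · exact mem_iInter₂.2 fun β (hβ : β < γ) =>
      hstep β hβ (mem_iInter₂.1 hx _ (hγ.add_one_lt hβ))

end CutToEmpty

theorem emptyWinsBM_of_cutWinsLeq {K : Type u} {I : Set (Set K)} {X : Set K} {γ : Ordinal.{u}}
    (hmono : ∀ A ∈ I, ∀ B, B ⊆ A → B ∈ I) (hX : X ∉ I) (hγ : IsSuccLimit γ)
    (hcut : CutWinsLeq I X γ) : EmptyWinsBM I γ :=
  let ⟨σC, coh, part, win⟩ := hcut
  ⟨emptyStrategyOfCut I X σC, isCoherent_emptyStrategyOfCut coh,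
    isWinningForEmpty_emptyStrategyOfCut coh part hmono hX hγ win⟩

theorem inter_mem_of_notMem_of_dense {K : Type u} {I : Set (Set K)}
    (hmono : ∀ A ∈ I, ∀ B, B ⊆ A → B ∈ I) {W₀ W : Set (Set K)} {Y w : Set K}
    (hW : W.Pairwise fun A B => A ∩ B ∈ I) (hW₀ : W₀ ⊆ W)
    (hdense : ∀ Z ⊆ Y, Z ∉ I → ∃ w ∈ W₀, Z ∩ w ∉ I) (hw : w ∈ W) (hw₀ : w ∉ W₀) :
    w ∩ Y ∈ I := by
  by_contra hwY
  obtain ⟨w', hw', hcap⟩ := hdense _ inter_subset_right hwY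
  have hne : w ≠ w' := fun h => hw₀ (h ▸ hw')
  exact hcap (hmono _ (hW hw (hW₀ hw') hne) _ (inter_subset_inter_left w' inter_subset_left))

section EmptyToCut

variable {K : Type u} {I : Set (Set K)} {σ : (Ordinal.{u} → Set K) → Ordinal.{u} → Set K}
  {γ : Ordinal.{u}}

theorem bmLegal_of_isWinningForEmpty (coh : IsCoherent σ) (hwin : IsWinningForEmpty I γ σ)
    {p : Ordinal.{u} → Set K} {α : Ordinal.{u}} (hαγ : α < γ) (hE : emptyTurn α)
    (hval : BMValid I p α) (hp : ∀ β < α, emptyTurn β → p β = σ p β) :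
    BMLegal I p α (σ p α) := by
  -- Let `σ` make every move from stage `α` on: no run through a later stage is valid unless
  -- `σ`'s move at `α` is legal, so Nonempty's legality is vacuous and `hwin` applies.
  have hF : IsCoherent fun (G : Ordinal.{u} → Set K) β => if β < α then p β else σ G β :=
    fun G G' β h => by dsimp only; split_ifs; exacts [rfl, coh G G' β h]
  set c := recSeq fun G β => if β < α then p β else σ G β
  have hc : ∀ β, c β = if β < α then p β else σ c β := recSeq_eq hF
  have hagree : ∀ β < α, c β = p β := fun β hβ => by rw [hc, if_pos hβ]
  have hcα : c α = σ p α := by rw [hc, if_neg (lt_irrefl α), coh _ _ α hagree]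
  suffices BMLegal I c α (c α) by rwa [hcα, bmLegal_congr hagree] at this
  by_contra hnot
  have hcomply : ∀ β < γ, emptyTurn β → c β = σ c β := fun β _ hβE => by
    rw [hc]
    split_ifs with hβα
    · rw [hp β hβα hβE, coh _ _ β fun b hb => (hagree b (hb.trans hβα)).symm]
    · rfl
  refine hnot ((hwin c hcomply fun β _ hN hvalβ => ?_).1 α hαγ hE ((bmValid_congr hagree).2 hval))
  rcases lt_or_ge β α with hβα | hαβ
  · rw [hagree β hβα, bmLegal_congr fun b hb => hagree b (hb.trans hβα)]
    exact hval β hβα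
  · exact absurd (hvalβ α (hαβ.lt_of_ne fun h => hN (h ▸ hE))) hnot

variable (I σ) (X : Set K)

/-- `w` is `σ`'s legal answer, inside `X`, to Nonempty playing `A` at stage `β` after `p`. -/
def IsLegalAnswer (p : Ordinal.{u} → Set K) (β : Ordinal.{u}) (A w : Set K) : Prop :=
  A ⊆ ⋂ b ∈ Iio β, p b ∧ A ∉ I ∧ σ (Function.update p β A) (β + 1) = w ∧ w ⊆ A ∧ w ∉ I ∧ w ⊆ X

def legalAnswers (p : Ordinal.{u} → Set K) (β : Ordinal.{u}) : Set (Set K) :=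
  {w | ∃ A, IsLegalAnswer I σ X p β A w}

noncomputable def answeredMove (p : Ordinal.{u} → Set K) (β : Ordinal.{u}) (w : Set K) : Set K :=
  Classical.epsilon fun A => IsLegalAnswer I σ X p β A w

noncomputable def maximalAnswers (p : Ordinal.{u} → Set K) (β : Ordinal.{u}) : Set (Set K) :=
  Classical.epsilon (IsMaximalAlmostDisjoint I (legalAnswers I σ X p β))

noncomputable def answerPartition (p : Ordinal.{u} → Set K) (β : Ordinal.{u}) : Set (Set K) :=
  Classical.epsilon fun W => maximalAnswers I σ X p β ⊆ W ∧ IPartition I X W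

open Classical in
noncomputable def replayStep (h : Ordinal.{u} → Set K) :
    (Ordinal.{u} → Set K) → Ordinal.{u} → Set K := fun G β =>
  if emptyTurn β then σ G β
  else if h β ∈ maximalAnswers I σ X G β then answeredMove I σ X G β (h β) else ∅

/-- The Banach–Mazur run in which `σ` plays for Empty and Nonempty plays the move answered by
Choose's pick `h β`, as long as that pick is one of the maximal answers. -/
noncomputable def replay (h : Ordinal.{u} → Set K) : Ordinal.{u} → Set K :=
  recSeq (replayStep I σ X h)

open Classical in
noncomputable def cutStrategyOfEmpty : (Ordinal.{u} → Set K) → Ordinal.{u} → Set (Set K) :=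
  fun h β => if emptyTurn β then {X} else answerPartition I σ X (replay I σ X h) β

variable {I σ X}

theorem answeredMove_spec {p : Ordinal.{u} → Set K} {β : Ordinal.{u}} {w : Set K}
    (hw : w ∈ legalAnswers I σ X p β) : IsLegalAnswer I σ X p β (answeredMove I σ X p β w) w :=
  Classical.epsilon_spec hw

theorem maximalAnswers_spec (p : Ordinal.{u} → Set K) (β : Ordinal.{u}) :
    IsMaximalAlmostDisjoint I (legalAnswers I σ X p β) (maximalAnswers I σ X p β) := by
  obtain ⟨W, -, hW⟩ := exists_maximal_pairwise (fun A B h => by rwa [inter_comm])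
    (empty_subset (legalAnswers I σ X p β)) (pairwise_empty fun A B => A ∩ B ∈ I)
  exact Classical.epsilon_spec (p := IsMaximalAlmostDisjoint I _) ⟨W, hW⟩

theorem answerPartition_spec (p : Ordinal.{u} → Set K) (β : Ordinal.{u}) :
    maximalAnswers I σ X p β ⊆ answerPartition I σ X p β ∧
      IPartition I X (answerPartition I σ X p β) := by
  obtain ⟨hsub, hpw, -⟩ := maximalAnswers_spec p β
  refine Classical.epsilon_spec (exists_iPartition_superset (fun w hw => ?_) hpw)
  obtain ⟨A, -, -, -, -, hwI, hwX⟩ := hsub hw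
  exact ⟨hwX, hwI⟩

theorem cutStrategyOfEmpty_of_emptyTurn {h : Ordinal.{u} → Set K} {β : Ordinal.{u}}
    (hE : emptyTurn β) : cutStrategyOfEmpty I σ X h β = {X} :=
  if_pos hE

theorem cutStrategyOfEmpty_of_not_emptyTurn {h : Ordinal.{u} → Set K} {β : Ordinal.{u}}
    (hN : ¬ emptyTurn β) :
    cutStrategyOfEmpty I σ X h β = answerPartition I σ X (replay I σ X h) β :=
  if_neg hN

theorem iPartition_cutStrategyOfEmpty (hX : X ∉ I) (h : Ordinal.{u} → Set K) (β : Ordinal.{u}) :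
    IPartition I X (cutStrategyOfEmpty I σ X h β) := by
  by_cases hE : emptyTurn β
  · rw [cutStrategyOfEmpty_of_emptyTurn hE]
    refine ⟨by simpa using hX, by simp, fun Z hZX hZI => ⟨X, rfl, ?_⟩⟩
    rwa [inter_eq_left.2 hZX]
  · rw [cutStrategyOfEmpty_of_not_emptyTurn hE]
    exact (answerPartition_spec _ β).2

variable (coh : IsCoherent σ)
include coh

theorem isLegalAnswer_congr {p p' : Ordinal.{u} → Set K} {β : Ordinal.{u}}
    (h : ∀ b < β, p b = p' b) : IsLegalAnswer I σ X p β = IsLegalAnswer I σ X p' β := by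
  have hupdate : ∀ A, σ (Function.update p β A) (β + 1) = σ (Function.update p' β A) (β + 1) :=
    fun A => coh _ _ _ fun b hb => by
      rcases (Order.lt_add_one_iff.1 hb).lt_or_eq with hb | rfl
      · rw [Function.update_of_ne hb.ne, Function.update_of_ne hb.ne, h b hb]
      · rw [Function.update_self, Function.update_self]
  have hcap : ⋂ b ∈ Iio β, p b = ⋂ b ∈ Iio β, p' b := iInter₂_congr fun b hb => h b hb
  ext A w
  simp only [IsLegalAnswer, hupdate, hcap]

theorem isCoherent_replayStep (h : Ordinal.{u} → Set K) : IsCoherent (replayStep I σ X h) := by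
  intro G G' β hG
  unfold replayStep maximalAnswers legalAnswers answeredMove
  rw [isLegalAnswer_congr coh hG, coh G G' β hG]

theorem replay_eq (h : Ordinal.{u} → Set K) (β : Ordinal.{u}) :
    replay I σ X h β = replayStep I σ X h (replay I σ X h) β :=
  recSeq_eq (isCoherent_replayStep coh h) β

theorem replay_congr {h h' : Ordinal.{u} → Set K} {β : Ordinal.{u}} (hh : ∀ b < β, h b = h' b) :
    ∀ b < β, replay I σ X h b = replay I σ X h' b := fun b hb =>
  recSeq_congr (isCoherent_replayStep coh h) (isCoherent_replayStep coh h')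
    fun c hc G => by rw [replayStep, replayStep, hh c (hc.trans_lt hb)]

theorem isCoherent_cutStrategyOfEmpty : IsCoherent (cutStrategyOfEmpty I σ X) := by
  intro h h' β hh
  simp only [cutStrategyOfEmpty, answerPartition, maximalAnswers, legalAnswers,
    isLegalAnswer_congr coh (replay_congr coh hh)]

theorem replay_of_emptyTurn {h : Ordinal.{u} → Set K} {β : Ordinal.{u}} (hE : emptyTurn β) :
    replay I σ X h β = σ (replay I σ X h) β := by
  rw [replay_eq coh, replayStep, if_pos hE]

theorem isLegalAnswer_replay {h : Ordinal.{u} → Set K} {β : Ordinal.{u}} (hN : ¬ emptyTurn β)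
    (hmem : h β ∈ maximalAnswers I σ X (replay I σ X h) β) :
    IsLegalAnswer I σ X (replay I σ X h) β (replay I σ X h β) (h β) := by
  rw [replay_eq coh h β, replayStep, if_neg hN, if_pos hmem]
  exact answeredMove_spec ((maximalAnswers_spec _ β).1 hmem)

theorem replay_add_one {h : Ordinal.{u} → Set K} {β : Ordinal.{u}} (hN : ¬ emptyTurn β)
    (hmem : h β ∈ maximalAnswers I σ X (replay I σ X h) β) :
    replay I σ X h (β + 1) = h β := by
  have hanswer := (isLegalAnswer_replay coh hN hmem).2.2.1
  rwa [Function.update_eq_self, ← replay_of_emptyTurn coh (emptyTurn_add_one_iff.2 hN)] at hanswer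

theorem exists_inter_notMem_maximalAnswers (hmono : ∀ A ∈ I, ∀ B, B ⊆ A → B ∈ I)
    (hwin : IsWinningForEmpty I γ σ) (hX0 : ∀ q, σ q 0 = X) {p : Ordinal.{u} → Set K}
    {β : Ordinal.{u}} (hβγ : β + 1 < γ) (hN : ¬ emptyTurn β) (hval : BMValid I p β)
    (hp : ∀ b < β, emptyTurn b → p b = σ p b) {Z : Set K} (hZ : Z ⊆ ⋂ b ∈ Iio β, p b)
    (hZI : Z ∉ I) : ∃ w ∈ maximalAnswers I σ X p β, Z ∩ w ∉ I := by
  set q := Function.update p β Z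
  have hq : ∀ b < β, q b = p b := fun b hb => Function.update_of_ne hb.ne _ _
  have hβ0 : 0 < β := pos_iff_ne_zero.2 fun h => hN (h ▸ emptyTurn_zero)
  have hqβ : q β = Z := Function.update_self β Z p
  have hvalq : BMValid I q (β + 1) := fun b hb => by
    change BMLegal I q b (q b)
    rcases (Order.lt_add_one_iff.1 hb).lt_or_eq with hb | rfl
    · rw [hq b hb, bmLegal_congr fun c hc => hq c (hc.trans hb)]
      exact hval b hb
    · rw [hqβ, bmLegal_congr hq]
      exact ⟨hZI, fun c hc => hZ.trans (biInter_subset_of_mem hc)⟩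
  have hcomply : ∀ b < β + 1, emptyTurn b → q b = σ q b := fun b hb hE => by
    have hbβ : b < β := (Order.lt_add_one_iff.1 hb).lt_of_ne fun h => hN (h ▸ hE)
    rw [hq b hbβ, hp b hbβ hE, coh _ _ b fun c hc => (hq c (hc.trans hbβ)).symm]
  obtain ⟨hwI, hwq⟩ :=
    bmLegal_of_isWinningForEmpty coh hwin hβγ (emptyTurn_add_one_iff.2 hN) hvalq hcomply
  have hwZ : σ q (β + 1) ⊆ Z := hqβ ▸ hwq β (lt_add_one β)
  have hwX : σ q (β + 1) ⊆ X := by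
    simpa [hq 0 hβ0, hp 0 hβ0 emptyTurn_zero, hX0] using hwq 0 (hβ0.trans (lt_add_one β))
  have hw : σ q (β + 1) ∈ legalAnswers I σ X p β := ⟨Z, hZ, hZI, rfl, hwZ, hwI, hwX⟩
  by_cases hmem : σ q (β + 1) ∈ maximalAnswers I σ X p β
  · exact ⟨_, hmem, by rwa [inter_eq_right.2 hwZ]⟩
  · obtain ⟨w, hw', hcap⟩ := (maximalAnswers_spec p β).2.2 _ hw hmem
    exact ⟨w, hw', fun hI => hcap (hmono _ hI _ (inter_subset_inter_left w hwZ))⟩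

theorem exists_pick_subset_replay (hX0 : ∀ q, σ q 0 = X) {h : Ordinal.{u} → Set K}
    (hpick : ∀ α < γ, h α ∈ cutStrategyOfEmpty I σ X h α) {b : Ordinal.{u}} (hb : b < γ)
    (hgood : ∀ c ≤ b, ¬ emptyTurn c → h c ∈ maximalAnswers I σ X (replay I σ X h) c) :
    ∃ c ≤ b, h c ⊆ replay I σ X h b := by
  by_cases hE : emptyTurn b
  · rcases eq_or_ne b 0 with rfl | h0
    · have hX : h 0 = X := by simpa [cutStrategyOfEmpty_of_emptyTurn hE] using hpick 0 hb
      exact ⟨0, le_rfl, by rw [hX, replay_of_emptyTurn coh hE, hX0]⟩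
    · have hN := hE.not_emptyTurn_pred h0
      have hstep := replay_add_one coh hN (hgood _ (hE.pred_lt h0).le hN)
      rw [hE.pred_add_one h0] at hstep
      exact ⟨pred b, (hE.pred_lt h0).le, hstep.ge⟩
  · exact ⟨b, le_rfl, (isLegalAnswer_replay coh hE (hgood b le_rfl hE)).2.2.2.1⟩

theorem iInter_picks_subset_iInter_replay (hX0 : ∀ q, σ q 0 = X) {h : Ordinal.{u} → Set K}
    (hpick : ∀ α < γ, h α ∈ cutStrategyOfEmpty I σ X h α) {δ : Ordinal.{u}} (hδ : δ ≤ γ)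
    (hgood : ∀ b < δ, ¬ emptyTurn b → h b ∈ maximalAnswers I σ X (replay I σ X h) b) :
    ⋂ c ∈ Iio δ, h c ⊆ ⋂ b ∈ Iio δ, replay I σ X h b :=
  subset_iInter₂ fun b (hb : b < δ) => by
    obtain ⟨c, hcb, hc⟩ := exists_pick_subset_replay coh hX0 hpick (hb.trans_le hδ)
      fun c hc => hgood c (hc.trans_lt hb)
    exact (biInter_subset_of_mem (hcb.trans_lt hb)).trans hc

theorem mem_maximalAnswers_of_bmValid (hmono : ∀ A ∈ I, ∀ B, B ⊆ A → B ∈ I)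
    (hwin : IsWinningForEmpty I γ σ) (hγ : IsSuccLimit γ) (hX0 : ∀ q, σ q 0 = X)
    {h : Ordinal.{u} → Set K} (hpick : ∀ α < γ, h α ∈ cutStrategyOfEmpty I σ X h α)
    (hpos : ∀ δ < γ, ⋂ β ∈ Iio δ, h β ∉ I) {β : Ordinal.{u}} (hβγ : β < γ)
    (hN : ¬ emptyTurn β) (hval : BMValid I (replay I σ X h) β)
    (hgood : ∀ b < β, ¬ emptyTurn b → h b ∈ maximalAnswers I σ X (replay I σ X h) b) :
    h β ∈ maximalAnswers I σ X (replay I σ X h) β := by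
  by_contra hnot
  have hpart := answerPartition_spec (I := I) (σ := σ) (X := X) (replay I σ X h) β
  have hmemW : h β ∈ answerPartition I σ X (replay I σ X h) β :=
    cutStrategyOfEmpty_of_not_emptyTurn hN ▸ hpick β hβγ
  have hsmall : h β ∩ ⋂ b ∈ Iio β, replay I σ X h b ∈ I :=
    inter_mem_of_notMem_of_dense hmono hpart.2.2.1 hpart.1
      (fun Z hZ hZI => exists_inter_notMem_maximalAnswers coh hmono hwin hX0
        (hγ.add_one_lt hβγ) hN hval (fun b _ hE => replay_of_emptyTurn coh hE) hZ hZI)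
      hmemW hnot
  refine hpos (β + 1) (hγ.add_one_lt hβγ) (hmono _ hsmall _ fun y hy => ?_)
  rw [mem_iInter₂] at hy
  exact ⟨hy β (lt_add_one β), iInter_picks_subset_iInter_replay coh hX0 hpick hβγ.le hgood
    (mem_iInter₂.2 fun c (hc : c < β) => hy c (hc.trans (lt_add_one β)))⟩

theorem bmLegal_replay (hmono : ∀ A ∈ I, ∀ B, B ⊆ A → B ∈ I)
    (hwin : IsWinningForEmpty I γ σ) (hγ : IsSuccLimit γ) (hX0 : ∀ q, σ q 0 = X)
    {h : Ordinal.{u} → Set K} (hpick : ∀ α < γ, h α ∈ cutStrategyOfEmpty I σ X h α)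
    (hpos : ∀ δ < γ, ⋂ β ∈ Iio δ, h β ∉ I) {β : Ordinal.{u}} (hβγ : β < γ) :
    BMLegal I (replay I σ X h) β (replay I σ X h β) ∧
      (¬ emptyTurn β → h β ∈ maximalAnswers I σ X (replay I σ X h) β) := by
  induction β using WellFoundedLT.induction with
  | _ β ih =>
    have hval : BMValid I (replay I σ X h) β := fun b hb => (ih b hb (hb.trans hβγ)).1
    have hgood : ¬ emptyTurn β → h β ∈ maximalAnswers I σ X (replay I σ X h) β := fun hN =>
      mem_maximalAnswers_of_bmValid coh hmono hwin hγ hX0 hpick hpos hβγ hN hval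
        fun b hb => (ih b hb (hb.trans hβγ)).2
    refine ⟨?_, hgood⟩
    by_cases hE : emptyTurn β
    · rw [replay_of_emptyTurn coh hE]
      exact bmLegal_of_isWinningForEmpty coh hwin hβγ hE hval
        fun b _ hbE => replay_of_emptyTurn coh hbE
    · obtain ⟨hsub, hI, -⟩ := isLegalAnswer_replay coh hE (hgood hE)
      exact ⟨hI, fun b hb => hsub.trans (biInter_subset_of_mem hb)⟩

theorem cutWinsLeq_of_isWinningForEmpty (hmono : ∀ A ∈ I, ∀ B, B ⊆ A → B ∈ I)
    (hwin : IsWinningForEmpty I γ σ) (hγ : IsSuccLimit γ) (hX0 : ∀ q, σ q 0 = X)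
    (hX : X ∉ I) : CutWinsLeq I X γ := by
  refine ⟨cutStrategyOfEmpty I σ X, isCoherent_cutStrategyOfEmpty coh,
    fun h α _ => iPartition_cutStrategyOfEmpty hX h α, fun h hpick ⟨hpos, x, hx⟩ => ?_⟩
  have hrun := fun α (hα : α < γ) => bmLegal_replay coh hmono hwin hγ hX0 hpick hpos hα
  refine (hwin (replay I σ X h) (fun α _ hE => replay_of_emptyTurn coh hE)
    fun α hα _ _ => (hrun α hα).1).2 ⟨fun α hα => (hrun α hα).1, x, ?_⟩
  exact iInter_picks_subset_iInter_replay coh hX0 hpick le_rfl (fun b hb => (hrun b hb).2) hx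

end EmptyToCut

theorem exists_cutWinsLeq_of_emptyWinsBM {K : Type u} {I : Set (Set K)} {γ : Ordinal.{u}}
    (hmono : ∀ A ∈ I, ∀ B, B ⊆ A → B ∈ I) (hγ : IsSuccLimit γ) (hempty : EmptyWinsBM I γ) :
    ∃ X : Set K, X ∉ I ∧ CutWinsLeq I X γ := by
  obtain ⟨σ, coh, hwin⟩ := hempty
  have hX0 : ∀ q, σ q 0 = σ (fun _ => ∅) 0 := fun q => coh _ _ 0 fun b hb => (not_lt_zero hb).elim
  have hX : σ (fun _ => ∅) 0 ∉ I :=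
    (bmLegal_of_isWinningForEmpty coh hwin hγ.bot_lt emptyTurn_zero
      (fun b hb => (not_lt_zero hb).elim) fun b hb => (not_lt_zero hb).elim).1
  exact ⟨_, hX, cutWinsLeq_of_isWinningForEmpty coh hmono hwin hγ hX0 hX⟩

theorem stmt18_general {K : Type u}
    (I : Set (Set K))
    (hmono : ∀ A ∈ I, ∀ B, B ⊆ A → B ∈ I)
    (γ : Ordinal.{u}) (hγ : Order.IsSuccLimit γ) :
    EmptyWinsBM I γ ↔ ∃ X : Set K, X ∉ I ∧ CutWinsLeq I X γ :=
  ⟨exists_cutWinsLeq_of_emptyWinsBM hmono hγ,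
    fun ⟨_, hX, hcut⟩ => emptyWinsBM_of_cutWinsLeq hmono hX hγ hcut⟩

/-- Let `κ` be regular uncountable, `I` an ideal on `κ`, and `γ < κ` a limit ordinal.
Then Empty has a winning strategy in the Banach–Mazur game `ℬ(I,γ)` if and only if Cut
has a winning strategy in the game `𝒢_∞(X, I, ≤γ)` for some `I`-positive `X`. -/
theorem stmt18 {K : Type u} (hreg : (#K).IsRegular) (hunc : ℵ₀ < #K)
    (I : Set (Set K))
    (hmono : ∀ A ∈ I, ∀ B, B ⊆ A → B ∈ I)
    (hunion : ∀ A ∈ I, ∀ B ∈ I, A ∪ B ∈ I)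
    (hempty : (∅ : Set K) ∈ I) (hproper : (Set.univ : Set K) ∉ I)
    (γ : Ordinal.{u}) (hγ : Order.IsSuccLimit γ) (hγκ : γ < (#K).ord) :
    EmptyWinsBM I γ ↔ ∃ X : Set K, X ∉ I ∧ CutWinsLeq I X γ :=
  stmt18_general I hmono γ hγ
end

section
/- Let κ be regular uncountable, I an ideal on κ, and γ < κ a limit ordinal. Then Nonempty has a winning strategy in the Banach–Mazur game B(I,γ) if and only if Choose has a winning strategy in the game G_∞(X, I, ≤γ) for all X ∈ I⁺. -/
open Cardinal Set

universe u

/-!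
If Nonempty wins `ℬ(I, γ)` and `X ∈ I⁺`, Choose plays an auxiliary run of `ℬ(I, γ)` in which Empty
opens with `X` and Nonempty follows her strategy: when Cut plays the `I`-partition `W`, maximality
of `W` gives `w ∈ W` meeting Nonempty's last move `y` positively, Choose picks `w` and Empty plays
`w ∩ y`. Nonempty's win in the auxiliary run is Choose's win.

Conversely, let Choose win `𝒢_∞(X, I, ≤γ)` for every `X ∈ I⁺`. Nonempty reads Empty's opening move
as `X` and each later reply of Empty as Choose's answer to some `I`-partition. This is possible
because she can always play `y` such that every `I`-positive subset of `y` is such an answer: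
otherwise some `I`-partition consists of sets that are either not answers or almost disjoint from
the current position, and Choose's answer to it would be illegal.
-/

namespace BanachMazur

open Ordinal Order

lemma isSuccLimit_iff_ne_zero_and_omega0_dvd {a : Ordinal.{u}} :
    IsSuccLimit a ↔ a ≠ 0 ∧ ω ∣ a := by
  rw [Ordinal.isSuccLimit_iff, isSuccPrelimit_iff_omega0_dvd]

lemma exists_omega0_mul_add_natCast (σ : Ordinal.{u}) : ∃ q, ∃ n : ℕ, σ = ω * q + n := by
  obtain ⟨n, hn⟩ := lt_omega0.1 (mod_lt σ omega0_ne_zero)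
  exact ⟨σ / ω, n, by rw [← hn, div_add_mod]⟩

lemma omega0_mul_add_natCast_inj {q q' : Ordinal.{u}} {n n' : ℕ}
    (h : ω * q + n = ω * q' + n') : q = q' ∧ n = n' := by
  have hdiv := congrArg (· / ω) h
  have hmod := congrArg (· % ω) h
  simp only [mul_add_div _ omega0_ne_zero, mul_add_mod_self,
    div_eq_zero_of_lt (natCast_lt_omega0 _), mod_eq_of_lt (natCast_lt_omega0 _),
    add_zero] at hdiv hmod
  exact ⟨hdiv, by exact_mod_cast hmod⟩

lemma emptyTurn_omega0_mul_add_natCast (q : Ordinal.{u}) (n : ℕ) :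
    emptyTurn (ω * q + n) ↔ q = 0 ∧ Even n ∨ q ≠ 0 ∧ Odd n := by
  constructor
  · rintro (⟨m, hm, hme⟩ | ⟨β, m, hβ, hm, hmo⟩)
    · obtain ⟨rfl, rfl⟩ := omega0_mul_add_natCast_inj (q' := 0) (by simpa using hm)
      exact Or.inl ⟨rfl, hme⟩
    · obtain ⟨hβ0, q', rfl⟩ := isSuccLimit_iff_ne_zero_and_omega0_dvd.1 hβ
      obtain ⟨rfl, rfl⟩ := omega0_mul_add_natCast_inj hm
      exact Or.inr ⟨right_ne_zero_of_mul hβ0, hmo⟩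
  · rintro (⟨rfl, he⟩ | ⟨hq, ho⟩)
    · exact Or.inl ⟨n, by simp, he⟩
    · exact Or.inr ⟨ω * q, n, isSuccLimit_iff_ne_zero_and_omega0_dvd.2
        ⟨mul_ne_zero omega0_ne_zero hq, dvd_mul_right _ _⟩, rfl, ho⟩

lemma emptyTurn_natCast (n : ℕ) : emptyTurn (n : Ordinal.{u}) ↔ Even n := by
  simpa using emptyTurn_omega0_mul_add_natCast 0 n

lemma emptyTurn_zero : emptyTurn (0 : Ordinal.{u}) := by
  simpa using (emptyTurn_natCast 0).2 Even.zero

/-- Round `ρ` of `ℬ(I, γ)` is Nonempty's move at stage `1 + 2 * ρ` and Empty's reply at the next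
stage, after Empty's opening move at stage `0`. As `1 + 2 * (ω * q + n) = ω * q + 2 * n` for
`q ≠ 0`, this matches `emptyTurn`: Nonempty moves first at limits. -/
def nonemptyStage (ρ : Ordinal.{u}) : Ordinal.{u} := 1 + 2 * ρ

lemma nonemptyStage_natCast (n : ℕ) :
    nonemptyStage (n : Ordinal.{u}) = ((1 + 2 * n : ℕ) : Ordinal.{u}) := by
  simp [nonemptyStage]

lemma nonemptyStage_omega0_mul_add_natCast {q : Ordinal.{u}} (hq : q ≠ 0) (n : ℕ) :
    nonemptyStage (ω * q + n) = ω * q + ((2 * n : ℕ) : Ordinal.{u}) := by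
  have h2ω : (2 : Ordinal.{u}) * ω = ω := by simpa using natCast_mul_omega0 (n := 2) two_pos
  rw [nonemptyStage, mul_add, ← mul_assoc, h2ω, ← add_assoc,
    one_add_of_omega0_le (le_mul_left _ (pos_iff_ne_zero.2 hq))]
  push_cast; rfl

lemma nonemptyStage_strictMono : StrictMono (nonemptyStage : Ordinal.{u} → Ordinal.{u}) :=
  fun _ _ h => by unfold nonemptyStage; gcongr

lemma nonemptyStage_add_one_strictMono :
    StrictMono fun ρ : Ordinal.{u} => nonemptyStage ρ + 1 := fun _ _ h => by
  simpa only [← succ_eq_add_one, succ_lt_succ_iff] using nonemptyStage_strictMono h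

lemma le_nonemptyStage (ρ : Ordinal.{u}) : ρ ≤ nonemptyStage ρ :=
  nonemptyStage_strictMono.le_apply

lemma nonemptyStage_pos (ρ : Ordinal.{u}) : 0 < nonemptyStage ρ :=
  (zero_lt_one' Ordinal).trans_le le_self_add

lemma not_emptyTurn_nonemptyStage (ρ : Ordinal.{u}) : ¬ emptyTurn (nonemptyStage ρ) := by
  obtain ⟨q, n, rfl⟩ := exists_omega0_mul_add_natCast ρ
  rcases eq_or_ne q 0 with rfl | hq
  · rw [mul_zero, zero_add, nonemptyStage_natCast, emptyTurn_natCast]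
    exact Nat.not_even_iff_odd.2 (by simp)
  · rw [nonemptyStage_omega0_mul_add_natCast hq, emptyTurn_omega0_mul_add_natCast]
    simp [hq]

lemma emptyTurn_nonemptyStage_add_one (ρ : Ordinal.{u}) : emptyTurn (nonemptyStage ρ + 1) := by
  obtain ⟨q, n, rfl⟩ := exists_omega0_mul_add_natCast ρ
  rcases eq_or_ne q 0 with rfl | hq
  · rw [mul_zero, zero_add, nonemptyStage_natCast, ← Nat.cast_add_one, emptyTurn_natCast]
    exact ⟨n + 1, by omega⟩
  · rw [nonemptyStage_omega0_mul_add_natCast hq, add_assoc, ← Nat.cast_add_one,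
      emptyTurn_omega0_mul_add_natCast]
    exact Or.inr ⟨hq, by simp⟩

lemma eq_zero_or_exists_nonemptyStage (σ : Ordinal.{u}) :
    σ = 0 ∨ ∃ ρ, nonemptyStage ρ = σ ∨ nonemptyStage ρ + 1 = σ := by
  obtain ⟨q, n, rfl⟩ := exists_omega0_mul_add_natCast σ
  rcases eq_or_ne q 0 with rfl | hq
  · rw [mul_zero, zero_add]
    rcases n with _ | n
    · exact Or.inl Nat.cast_zero
    obtain ⟨k, rfl | rfl⟩ := Nat.even_or_odd' n
    · refine Or.inr ⟨k, Or.inl ?_⟩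
      rw [nonemptyStage_natCast]; congr 1; omega
    · refine Or.inr ⟨k, Or.inr ?_⟩
      rw [nonemptyStage_natCast, ← Nat.cast_add_one]; congr 1; omega
  · obtain ⟨k, rfl | rfl⟩ := Nat.even_or_odd' n
    · exact Or.inr ⟨ω * q + k, Or.inl (nonemptyStage_omega0_mul_add_natCast hq k)⟩
    · refine Or.inr ⟨ω * q + k, Or.inr ?_⟩
      rw [nonemptyStage_omega0_mul_add_natCast hq, add_assoc, ← Nat.cast_add_one]

lemma not_emptyTurn_iff {σ : Ordinal.{u}} : ¬ emptyTurn σ ↔ ∃ ρ, nonemptyStage ρ = σ := by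
  refine ⟨fun hσ => ?_, fun ⟨ρ, hρ⟩ => hρ ▸ not_emptyTurn_nonemptyStage ρ⟩
  rcases eq_zero_or_exists_nonemptyStage σ with rfl | ⟨ρ, hρ | hρ⟩
  · exact absurd emptyTurn_zero hσ
  · exact ⟨ρ, hρ⟩
  · exact absurd (hρ ▸ emptyTurn_nonemptyStage_add_one ρ) hσ

lemma emptyTurn_iff {σ : Ordinal.{u}} :
    emptyTurn σ ↔ σ = 0 ∨ ∃ ρ, nonemptyStage ρ + 1 = σ := by
  refine ⟨fun hσ => ?_, ?_⟩
  · rcases eq_zero_or_exists_nonemptyStage σ with h | ⟨ρ, hρ | hρ⟩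
    · exact Or.inl h
    · exact absurd (hρ ▸ hσ) (not_emptyTurn_nonemptyStage ρ)
    · exact Or.inr ⟨ρ, hρ⟩
  · rintro (rfl | ⟨ρ, rfl⟩)
    exacts [emptyTurn_zero, emptyTurn_nonemptyStage_add_one ρ]

lemma nonemptyStage_of_isSuccLimit {γ : Ordinal.{u}} (hγ : IsSuccLimit γ) :
    nonemptyStage γ = γ := by
  obtain ⟨hγ0, q, rfl⟩ := isSuccLimit_iff_ne_zero_and_omega0_dvd.1 hγ
  simpa using nonemptyStage_omega0_mul_add_natCast (right_ne_zero_of_mul hγ0) 0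

lemma nonemptyStage_lt {γ ρ : Ordinal.{u}} (hγ : IsSuccLimit γ) (hρ : ρ < γ) :
    nonemptyStage ρ < γ :=
  nonemptyStage_of_isSuccLimit hγ ▸ nonemptyStage_strictMono hρ

lemma nonemptyStage_add_one_lt {γ ρ : Ordinal.{u}} (hγ : IsSuccLimit γ) (hρ : ρ < γ) :
    nonemptyStage ρ + 1 < γ :=
  hγ.add_one_lt (nonemptyStage_lt hγ hρ)

lemma nonemptyStage_add_one_lt_iff {ρ ρ' : Ordinal.{u}} :
    nonemptyStage ρ + 1 < nonemptyStage ρ' ↔ ρ < ρ' := by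
  refine ⟨fun h => nonemptyStage_strictMono.lt_iff_lt.1 ((lt_add_one _).trans h), fun h => ?_⟩
  refine (add_one_le_of_lt (nonemptyStage_strictMono h)).lt_of_ne fun heq => ?_
  exact not_emptyTurn_nonemptyStage ρ' (heq ▸ emptyTurn_nonemptyStage_add_one ρ)

lemma exists_emptyTurn_mem_Ico {σ β : Ordinal.{u}} (hσ : ¬ emptyTurn σ) (hβ : β < σ) :
    ∃ e, emptyTurn e ∧ β ≤ e ∧ e < σ := by
  by_cases hβe : emptyTurn β
  · exact ⟨β, hβe, le_rfl, hβ⟩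
  obtain ⟨ρ, rfl⟩ := not_emptyTurn_iff.1 hβe
  refine ⟨_, emptyTurn_nonemptyStage_add_one ρ, (lt_add_one _).le,
    (add_one_le_of_lt hβ).lt_of_ne fun heq => hσ ?_⟩
  exact heq ▸ emptyTurn_nonemptyStage_add_one ρ

section TransfiniteRecursion

variable {α : Type*} [EmptyCollection α]

noncomputable def truncate (s : Ordinal.{u} → α) (σ : Ordinal.{u}) : Ordinal.{u} → α :=
  fun β => if β < σ then s β else ∅

lemma truncate_of_lt {s : Ordinal.{u} → α} {σ β : Ordinal.{u}} (h : β < σ) :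
    truncate s σ β = s β :=
  if_pos h

lemma truncate_congr {s s' : Ordinal.{u} → α} {σ : Ordinal.{u}} (h : ∀ β < σ, s β = s' β) :
    truncate s σ = truncate s' σ :=
  funext fun β => by by_cases hβ : β < σ <;> simp [truncate, hβ, h]

noncomputable def transfiniteSeq (f : (Ordinal.{u} → α) → Ordinal.{u} → α) : Ordinal.{u} → α :=
  Ordinal.lt_wf.fix fun σ rec => f (fun β => if h : β < σ then rec β h else ∅) σ

lemma transfiniteSeq_eq (f : (Ordinal.{u} → α) → Ordinal.{u} → α) (σ : Ordinal.{u}) :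
    transfiniteSeq f σ = f (truncate (transfiniteSeq f) σ) σ := by
  rw [transfiniteSeq, WellFounded.fix_eq]
  rfl

lemma transfiniteSeq_congr {f f' : (Ordinal.{u} → α) → Ordinal.{u} → α} {b : Ordinal.{u}}
    (h : ∀ t, ∀ σ < b, f t σ = f' t σ) : ∀ σ < b, transfiniteSeq f σ = transfiniteSeq f' σ := by
  intro σ
  induction σ using WellFoundedLT.induction with
  | _ σ ih =>
    intro hσ
    rw [transfiniteSeq_eq, transfiniteSeq_eq, h _ σ hσ,
      truncate_congr fun β hβ => ih β hβ (hβ.trans hσ)]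

end TransfiniteRecursion

lemma biInter_Iio_truncate {K : Type*} (s : Ordinal.{u} → Set K) (σ : Ordinal.{u}) :
    ⋂ β ∈ Iio σ, truncate s σ β = ⋂ β ∈ Iio σ, s β :=
  iInter₂_congr fun _ hβ => truncate_of_lt hβ

section Partitions

variable {K : Type u} {I : Set (Set K)} {X : Set K}

lemma exists_IPartition_subset (hmono : ∀ A ∈ I, ∀ B, B ⊆ A → B ∈ I) (D : Set (Set K))
    (hD : ∀ d ∈ D, d ⊆ X ∧ d ∉ I) (hdense : ∀ Z ⊆ X, Z ∉ I → ∃ d ∈ D, d ⊆ Z) :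
    ∃ W ⊆ D, IPartition I X W := by
  let AlmostDisjoint : Set (Set (Set K)) :=
    {W | W ⊆ D ∧ ∀ a ∈ W, ∀ b ∈ W, a ≠ b → a ∩ b ∈ I}
  obtain ⟨W, ⟨hWD, hWdisj⟩, hWmax⟩ := zorn_subset AlmostDisjoint fun c hc hchain => by
    refine ⟨⋃₀ c, ⟨sUnion_subset fun A hA => (hc hA).1, ?_⟩, fun _ => subset_sUnion_of_mem⟩
    rintro a ⟨A, hA, ha⟩ b ⟨B, hB, hb⟩ hab
    rcases hchain.total hA hB with h | h
    exacts [(hc hB).2 a (h ha) b hb hab, (hc hA).2 a ha b (h hb) hab]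
  refine ⟨W, hWD, fun A hA => hD A (hWD hA), hWdisj, fun Z hZX hZ => ?_⟩
  by_contra! hZW
  obtain ⟨d, hdD, hdZ⟩ := hdense Z hZX hZ
  have hdW : ∀ w ∈ W, d ∩ w ∈ I := fun w hw =>
    hmono _ (hZW w hw) _ (inter_subset_inter_left _ hdZ)
  have hd : d ∈ W := hWmax ⟨insert_subset hdD hWD, by
    rintro a (rfl | ha) b (rfl | hb) hab
    exacts [absurd rfl hab, hdW b hb, inter_comm a b ▸ hdW a ha, hWdisj a ha b hb hab]⟩
    (subset_insert _ _) (mem_insert _ _)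
  exact (hD d hdD).2 (by simpa using hdW d hd)

lemma exists_IPartition (hmono : ∀ A ∈ I, ∀ B, B ⊆ A → B ∈ I) : ∃ W, IPartition I X W :=
  let ⟨W, _, hW⟩ := exists_IPartition_subset hmono {d | d ⊆ X ∧ d ∉ I} (fun _ hd => hd)
    fun Z hZX hZ => ⟨Z, ⟨hZX, hZ⟩, subset_rfl⟩
  ⟨W, hW⟩

lemma _root_.IPartition.exists_inter_notMem {W : Set (Set K)} {Z : Set K} (hW : IPartition I X W)
    (hZX : Z ⊆ X) (hZ : Z ∉ I) : ∃ w ∈ W, w ∩ Z ∉ I :=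
  let ⟨w, hw, hwZ⟩ := hW.2.2 Z hZX hZ
  ⟨w, hw, inter_comm Z w ▸ hwZ⟩

end Partitions

section Runs

variable {K : Type u} {I : Set (Set K)} {s : Ordinal.{u} → Set K}

lemma _root_.BMValid.mono {σ σ' : Ordinal.{u}} (hs : BMValid I s σ') (h : σ ≤ σ') :
    BMValid I s σ :=
  fun β hβ => hs β (hβ.trans_le h)

lemma _root_.BMValid.biInter_Iio_add_one_notMem (hmono : ∀ A ∈ I, ∀ B, B ⊆ A → B ∈ I)
    {σ : Ordinal.{u}} (hs : BMValid I s (σ + 1)) : ⋂ β ∈ Iio (σ + 1), s β ∉ I := by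
  refine fun hI => (hs σ (lt_add_one σ)).1 (hmono _ hI _ (subset_iInter₂ fun β hβ => ?_))
  rcases (lt_add_one_iff.1 (mem_Iio.1 hβ)).lt_or_eq with hβ | rfl
  exacts [(hs σ (lt_add_one σ)).2 β hβ, subset_rfl]

lemma mem_of_mem_answers {s : Ordinal.{u} → Set K} {σ : Ordinal.{u}} (hs : BMValid I s σ)
    (hσ : ¬ emptyTurn σ) {t : K} (h0 : t ∈ s 0)
    (h : ∀ ρ, nonemptyStage ρ + 1 < σ → t ∈ s (nonemptyStage ρ + 1)) {β : Ordinal.{u}}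
    (hβ : β < σ) : t ∈ s β := by
  obtain ⟨e, he, hβe, heσ⟩ := exists_emptyTurn_mem_Ico hσ hβ
  have hte : t ∈ s e := by
    rcases emptyTurn_iff.1 he with rfl | ⟨ρ, rfl⟩
    exacts [h0, h ρ heσ]
  rcases hβe.lt_or_eq with hlt | rfl
  exacts [(hs e heσ).2 β hlt hte, hte]

end Runs

section Forward

variable {K : Type u} {I : Set (Set K)} {X : Set K}
  {τ : (Ordinal.{u} → Set K) → Ordinal.{u} → Set K} {W : Ordinal.{u} → Set (Set K)}

noncomputable def pickMeeting (I : Set (Set K)) (W : Set (Set K)) (Z : Set K) : Set K :=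
  Classical.epsilon fun w => w ∈ W ∧ w ∩ Z ∉ I

lemma pickMeeting_spec {W : Set (Set K)} {Z : Set K} (h : ∃ w ∈ W, w ∩ Z ∉ I) :
    pickMeeting I W Z ∈ W ∧ pickMeeting I W Z ∩ Z ∉ I :=
  Classical.epsilon_spec (p := fun w => w ∈ W ∧ w ∩ Z ∉ I) h

noncomputable def auxRun (I : Set (Set K)) (τ : (Ordinal.{u} → Set K) → Ordinal.{u} → Set K)
    (X : Set K) (W : Ordinal.{u} → Set (Set K)) : Ordinal.{u} → Set K :=
  open Classical in
  transfiniteSeq fun t σ =>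
    if σ = 0 then X
    else if h : ∃ ρ, nonemptyStage ρ + 1 = σ then
      pickMeeting I (W h.choose) (⋂ β ∈ Iio σ, t β) ∩ ⋂ β ∈ Iio σ, t β
    else τ t σ

noncomputable def auxChoose (I : Set (Set K)) (τ : (Ordinal.{u} → Set K) → Ordinal.{u} → Set K)
    (X : Set K) (W : Ordinal.{u} → Set (Set K)) (ρ : Ordinal.{u}) : Set K :=
  pickMeeting I (W ρ) (⋂ β ∈ Iio (nonemptyStage ρ + 1), auxRun I τ X W β)

lemma auxRun_zero : auxRun I τ X W 0 = X := by
  rw [auxRun, transfiniteSeq_eq, if_pos rfl]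

lemma auxRun_nonemptyStage_add_one (ρ : Ordinal.{u}) :
    auxRun I τ X W (nonemptyStage ρ + 1) =
      auxChoose I τ X W ρ ∩ ⋂ β ∈ Iio (nonemptyStage ρ + 1), auxRun I τ X W β := by
  have h : ∃ ρ', nonemptyStage ρ' + 1 = nonemptyStage ρ + 1 := ⟨ρ, rfl⟩
  rw [auxRun, transfiniteSeq_eq, if_neg (zero_lt_one.trans_le le_add_self).ne', dif_pos h,
    nonemptyStage_add_one_strictMono.injective h.choose_spec, biInter_Iio_truncate]
  rfl

lemma auxRun_of_not_emptyTurn {σ : Ordinal.{u}} (hσ : ¬ emptyTurn σ) :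
    auxRun I τ X W σ = τ (truncate (auxRun I τ X W) σ) σ := by
  have h0 : σ ≠ 0 := fun h => hσ (h ▸ emptyTurn_zero)
  have hE : ¬ ∃ ρ, nonemptyStage ρ + 1 = σ :=
    fun ⟨ρ, hρ⟩ => hσ (hρ ▸ emptyTurn_nonemptyStage_add_one ρ)
  rw [auxRun, transfiniteSeq_eq, if_neg h0, dif_neg hE]

lemma auxChoose_spec (hmono : ∀ A ∈ I, ∀ B, B ⊆ A → B ∈ I) {ρ : Ordinal.{u}}
    (hW : IPartition I X (W ρ)) (hs : BMValid I (auxRun I τ X W) (nonemptyStage ρ + 1)) :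
    auxChoose I τ X W ρ ∈ W ρ ∧ auxRun I τ X W (nonemptyStage ρ + 1) ∉ I ∧
      auxRun I τ X W (nonemptyStage ρ + 1) ⊆ auxChoose I τ X W ρ ∧
      ∀ β < nonemptyStage ρ + 1, auxRun I τ X W (nonemptyStage ρ + 1) ⊆ auxRun I τ X W β := by
  have hZX : ⋂ β ∈ Iio (nonemptyStage ρ + 1), auxRun I τ X W β ⊆ X :=
    (biInter_subset_of_mem (mem_Iio.2 ((nonemptyStage_pos ρ).trans (lt_add_one _)))).trans
      auxRun_zero.subset
  obtain ⟨hmem, hpos⟩ :=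
    pickMeeting_spec (hW.exists_inter_notMem hZX (hs.biInter_Iio_add_one_notMem hmono))
  rw [auxRun_nonemptyStage_add_one]
  exact ⟨hmem, hpos, inter_subset_left,
    fun β hβ => inter_subset_right.trans (biInter_subset_of_mem hβ)⟩

lemma auxChoose_congr {W' : Ordinal.{u} → Set (Set K)} {ρ : Ordinal.{u}}
    (h : ∀ β ≤ ρ, W β = W' β) : auxChoose I τ X W ρ = auxChoose I τ X W' ρ := by
  have hrun : ∀ σ < nonemptyStage ρ + 1, auxRun I τ X W σ = auxRun I τ X W' σ := by
    refine transfiniteSeq_congr fun t σ hσ => ?_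
    split_ifs with h0 hE
    · rfl
    · rw [h _ (nonemptyStage_strictMono.le_iff_le.1
        (lt_add_one_iff.1 (((lt_add_one _).trans_eq hE.choose_spec).trans hσ)))]
    · rfl
  rw [auxChoose, auxChoose, h ρ le_rfl]
  congr 1
  exact iInter₂_congr hrun

theorem chooseWinsLeq_of_nonemptyWinsBM (hmono : ∀ A ∈ I, ∀ B, B ⊆ A → B ∈ I)
    {γ : Ordinal.{u}} (hγ : IsSuccLimit γ) (h : NonemptyWinsBM I γ) (hX : X ∉ I) :
    ChooseWinsLeq I X γ := by
  obtain ⟨τ, hτcoh, hτwin⟩ := h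
  refine ⟨auxChoose I τ X, fun W W' ρ h => auxChoose_congr h, fun W hW => ?_⟩
  have hfollow : ∀ σ < γ, ¬ emptyTurn σ → auxRun I τ X W σ = τ (auxRun I τ X W) σ :=
    fun σ _ hσ => (auxRun_of_not_emptyTurn hσ).trans (hτcoh _ _ σ fun _ => truncate_of_lt)
  have hlegal : ∀ σ < γ, emptyTurn σ → BMValid I (auxRun I τ X W) σ →
      BMLegal I (auxRun I τ X W) σ (auxRun I τ X W σ) := by
    intro σ hσγ hσ hs
    rcases emptyTurn_iff.1 hσ with rfl | ⟨ρ, rfl⟩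
    · exact ⟨by rwa [auxRun_zero], fun _ hβ => (not_lt_zero hβ).elim⟩
    · have hρ := (le_nonemptyStage ρ).trans_lt ((lt_add_one _).trans hσγ)
      obtain ⟨-, hpos, -, hsub⟩ := auxChoose_spec hmono (hW ρ hρ) hs
      exact ⟨hpos, hsub⟩
  obtain ⟨-, hvalid, pt, hpt⟩ := hτwin _ hfollow hlegal
  have hspec := fun ρ (hρ : ρ < γ) =>
    auxChoose_spec hmono (hW ρ hρ) (hvalid.mono (nonemptyStage_add_one_lt hγ hρ).le)
  refine ⟨fun ρ hρ => (hspec ρ hρ).1, fun δ hδ hI => ?_, pt, ?_⟩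
  · refine (hspec δ hδ).2.1 (hmono _ hI _ (subset_iInter₂ fun β hβ => ?_))
    exact ((hspec δ hδ).2.2.2 _ (nonemptyStage_add_one_strictMono hβ)).trans
      (hspec β (hβ.trans hδ)).2.2.1
  · exact mem_iInter₂.2 fun ρ hρ =>
      (hspec ρ hρ).2.2.1 (mem_iInter₂.1 hpt _ (nonemptyStage_add_one_lt hγ hρ))

end Forward

section Backward

open Function

variable {K : Type u} {I : Set (Set K)} {X : Set K} {γ : Ordinal.{u}}

def IsCoherent (τ : (Ordinal.{u} → Set (Set K)) → Ordinal.{u} → Set K) : Prop :=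
  ∀ W W' : Ordinal.{u} → Set (Set K), ∀ α, (∀ β ≤ α, W β = W' β) → τ W α = τ W' α

def IsWinningChoose (I : Set (Set K)) (X : Set K) (γ : Ordinal.{u})
    (τ : (Ordinal.{u} → Set (Set K)) → Ordinal.{u} → Set K) : Prop :=
  IsCoherent τ ∧ ∀ W : Ordinal.{u} → Set (Set K), (∀ α < γ, IPartition I X (W α)) →
    (∀ α < γ, τ W α ∈ W α) ∧ (∀ δ < γ, ⋂ β ∈ Iio δ, τ W β ∉ I) ∧ (⋂ β ∈ Iio γ, τ W β).Nonempty

lemma chooseWinsLeq_iff : ChooseWinsLeq I X γ ↔ ∃ τ, IsWinningChoose I X γ τ :=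
  Iff.rfl

lemma update_eq_update {p p' : Ordinal.{u} → Set (Set K)} {ρ : Ordinal.{u}} (W : Set (Set K))
    (h : ∀ β < ρ, p β = p' β) : ∀ β ≤ ρ, update p ρ W β = update p' ρ W β := by
  intro β hβ
  rcases hβ.lt_or_eq with hβ | rfl
  · rw [update_of_ne hβ.ne, update_of_ne hβ.ne, h β hβ]
  · rw [update_self, update_self]

lemma IsCoherent.apply_update_of_lt {τ : (Ordinal.{u} → Set (Set K)) → Ordinal.{u} → Set K}
    (hτ : IsCoherent τ) (p : Ordinal.{u} → Set (Set K)) {ρ β : Ordinal.{u}} (W : Set (Set K))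
    (hβ : β < ρ) : τ (update p ρ W) β = τ p β :=
  hτ _ _ β fun _ hb => update_of_ne (hb.trans_lt hβ).ne _ _

lemma IsWinningChoose.inter_apply_notMem (hmono : ∀ A ∈ I, ∀ B, B ⊆ A → B ∈ I)
    {τ : (Ordinal.{u} → Set (Set K)) → Ordinal.{u} → Set K} (hτ : IsWinningChoose I X γ τ)
    (hγ : IsSuccLimit γ) {p : Ordinal.{u} → Set (Set K)} (hp : ∀ β < γ, IPartition I X (p β)) {ρ : Ordinal.{u}} (hρ : ρ < γ) :
    (X ∩ ⋂ β ∈ Iio ρ, τ p β) ∩ τ p ρ ∉ I := by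
  obtain ⟨hmem, hpos, -⟩ := hτ.2 p hp
  refine fun hI => hpos (ρ + 1) (hγ.add_one_lt hρ) (hmono _ hI _ fun t ht => ?_)
  have ht' := mem_iInter₂.1 ht
  have htρ := ht' ρ (lt_add_one ρ)
  exact ⟨⟨((hp ρ hρ).1 _ (hmem ρ hρ)).1 htρ,
    mem_iInter₂.2 fun β hβ => ht' β ((mem_Iio.1 hβ).trans (lt_add_one ρ))⟩, htρ⟩

/-- `y` is a move for Nonempty in round `ρ` after which every `I`-positive reply of Empty is `τ`'s
answer to some `I`-partition played in round `ρ` after `p`. -/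
def Forces (I : Set (Set K)) (X : Set K) (τ : (Ordinal.{u} → Set (Set K)) → Ordinal.{u} → Set K)
    (p : Ordinal.{u} → Set (Set K)) (ρ : Ordinal.{u}) (y : Set K) : Prop :=
  y ∉ I ∧ y ⊆ X ∩ ⋂ β ∈ Iio ρ, τ p β ∧
    ∀ z ⊆ y, z ∉ I → ∃ W, IPartition I X W ∧ τ (update p ρ W) ρ = z

lemma Forces.congr {τ : (Ordinal.{u} → Set (Set K)) → Ordinal.{u} → Set K} (hτ : IsCoherent τ)
    {p p' : Ordinal.{u} → Set (Set K)} {ρ : Ordinal.{u}} {y : Set K}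
    (hpp' : ∀ β < ρ, p β = p' β) (h : Forces I X τ p ρ y) : Forces I X τ p' ρ y := by
  obtain ⟨hy, hyx, hyz⟩ := h
  refine ⟨hy, ?_, fun z hz hzI => ?_⟩
  · rwa [iInter₂_congr fun β (hβ : β ∈ Iio ρ) =>
      hτ p p' β fun b hb => hpp' b (hb.trans_lt hβ)] at hyx
  · obtain ⟨W, hW, hWz⟩ := hyz z hz hzI
    exact ⟨W, hW, (hτ _ _ ρ (update_eq_update W hpp')).symm.trans hWz⟩

theorem exists_forces (hmono : ∀ A ∈ I, ∀ B, B ⊆ A → B ∈ I)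
    (hunion : ∀ A ∈ I, ∀ B ∈ I, A ∪ B ∈ I) (hempty : (∅ : Set K) ∈ I) (hγ : IsSuccLimit γ)
    {τ : (Ordinal.{u} → Set (Set K)) → Ordinal.{u} → Set K} (hτ : IsWinningChoose I X γ τ)
    {p : Ordinal.{u} → Set (Set K)} (hp : ∀ β < γ, IPartition I X (p β)) {ρ : Ordinal.{u}}
    (hρ : ρ < γ) : ∃ y, Forces I X τ p ρ y := by
  have hupd : ∀ W, IPartition I X W → ∀ β < γ, IPartition I X (update p ρ W β) := by
    intro W hW β hβ
    rcases eq_or_ne β ρ with rfl | hne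
    · rwa [update_self]
    · rw [update_of_ne hne]; exact hp β hβ
  set x := X ∩ ⋂ β ∈ Iio ρ, τ p β
  have hmeet : ∀ W, IPartition I X W → x ∩ τ (update p ρ W) ρ ∉ I := by
    intro W hW
    have h := hτ.inter_apply_notMem hmono hγ (hupd W hW) hρ
    rwa [iInter₂_congr fun β (hβ : β ∈ Iio ρ) => hτ.1.apply_update_of_lt p W hβ] at h
  by_contra hno
  have hsmall : ∀ Z ⊆ x, Z ∉ I →
      ∃ z ⊆ Z, z ∉ I ∧ ∀ W, IPartition I X W → τ (update p ρ W) ρ ≠ z := by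
    intro Z hZx hZ
    by_contra! h
    exact hno ⟨Z, hZ, hZx, h⟩
  -- The answer of `τ` to an `I`-partition inside `D` can lie in neither part of `D`.
  let D : Set (Set K) := {z | z ⊆ x ∧ z ∉ I ∧ ∀ W, IPartition I X W → τ (update p ρ W) ρ ≠ z} ∪
    {z | z ⊆ X ∧ z ∉ I ∧ z ∩ x ∈ I}
  have hD : ∀ d ∈ D, d ⊆ X ∧ d ∉ I := by
    rintro d (⟨hdx, hd, -⟩ | ⟨hdX, hd, -⟩)
    exacts [⟨hdx.trans inter_subset_left, hd⟩, ⟨hdX, hd⟩]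
  have hDdense : ∀ Z ⊆ X, Z ∉ I → ∃ d ∈ D, d ⊆ Z := by
    intro Z hZX hZ
    by_cases hZx : Z ∩ x ∈ I
    · refine ⟨Z \ x, Or.inr ⟨sdiff_subset.trans hZX, fun hd => hZ ?_, ?_⟩, sdiff_subset⟩
      · simpa using hunion _ hZx _ hd
      · simpa using hempty
    · obtain ⟨z, hzZ, hz, hzW⟩ := hsmall (Z ∩ x) inter_subset_right hZx
      exact ⟨z, Or.inl ⟨hzZ.trans inter_subset_right, hz, hzW⟩, hzZ.trans inter_subset_left⟩
  obtain ⟨W, hWD, hW⟩ := exists_IPartition_subset hmono D hD hDdense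
  have hmem : τ (update p ρ W) ρ ∈ W := by
    simpa using (hτ.2 _ (hupd W hW)).1 ρ hρ
  rcases hWD hmem with ⟨-, -, hne⟩ | ⟨-, -, hI⟩
  · exact hne W hW rfl
  · exact hmeet W hW (inter_comm x _ ▸ hI)

variable {τ : Set K → (Ordinal.{u} → Set (Set K)) → Ordinal.{u} → Set K}
  {W₀ : Set K → Set (Set K)} {s : Ordinal.{u} → Set K}

def IsAnswer (I : Set (Set K))
    (τ : Set K → (Ordinal.{u} → Set (Set K)) → Ordinal.{u} → Set K) (s : Ordinal.{u} → Set K)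
    (P : Ordinal.{u} → Set (Set K)) (ρ : Ordinal.{u}) (W : Set (Set K)) : Prop :=
  IPartition I (s 0) W ∧ τ (s 0) (update P ρ W) ρ = s (nonemptyStage ρ + 1)

open Classical in
/-- Cut's partitions for which Choose, following `τ (s 0)`, answers round `ρ` with Empty's move
at stage `nonemptyStage ρ + 1` of the run `s`, when such a partition exists. -/
noncomputable def replay (I : Set (Set K))
    (τ : Set K → (Ordinal.{u} → Set (Set K)) → Ordinal.{u} → Set K) (W₀ : Set K → Set (Set K))
    (s : Ordinal.{u} → Set K) : Ordinal.{u} → Set (Set K) :=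
  transfiniteSeq fun P ρ =>
    if ∃ W, IsAnswer I τ s P ρ W then Classical.epsilon (IsAnswer I τ s P ρ) else W₀ (s 0)

open Classical in
lemma replay_eq (ρ : Ordinal.{u}) : replay I τ W₀ s ρ =
    if ∃ W, IsAnswer I τ s (truncate (replay I τ W₀ s) ρ) ρ W
    then Classical.epsilon (IsAnswer I τ s (truncate (replay I τ W₀ s) ρ) ρ) else W₀ (s 0) :=
  transfiniteSeq_eq _ ρ

lemma replay_isPartition (hW₀ : IPartition I (s 0) (W₀ (s 0))) (ρ : Ordinal.{u}) :
    IPartition I (s 0) (replay I τ W₀ s ρ) := by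
  rw [replay_eq]
  split_ifs with h
  exacts [(Classical.epsilon_spec h).1, hW₀]

open Classical in
lemma replay_congr {s' : Ordinal.{u} → Set K} (h0 : s 0 = s' 0) {ρ : Ordinal.{u}}
    (h : ∀ β < ρ, s (nonemptyStage β + 1) = s' (nonemptyStage β + 1)) :
    ∀ β < ρ, replay I τ W₀ s β = replay I τ W₀ s' β :=
  transfiniteSeq_congr fun P β hβ => by
    have hans : IsAnswer I τ s P β = IsAnswer I τ s' P β := by
      funext W
      simp only [IsAnswer, h0, h β hβ]
    simp only [hans, h0]

lemma apply_replay (hτ : IsCoherent (τ (s 0))) {ρ : Ordinal.{u}}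
    (h : ∃ W, IsAnswer I τ s (replay I τ W₀ s) ρ W) :
    τ (s 0) (replay I τ W₀ s) ρ = s (nonemptyStage ρ + 1) := by
  have hagree : ∀ W, ∀ β ≤ ρ,
      update (truncate (replay I τ W₀ s) ρ) ρ W β = update (replay I τ W₀ s) ρ W β :=
    fun W => update_eq_update W fun _ => truncate_of_lt
  have hex : ∃ W, IsAnswer I τ s (truncate (replay I τ W₀ s) ρ) ρ W :=
    let ⟨W, hW, hWs⟩ := h
    ⟨W, hW, (hτ _ _ ρ (hagree W)).trans hWs⟩
  calc τ (s 0) (replay I τ W₀ s) ρ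
      = τ (s 0) (update (truncate (replay I τ W₀ s) ρ) ρ (replay I τ W₀ s ρ)) ρ :=
        hτ _ _ ρ fun β hβ => by rw [hagree _ β hβ, update_eq_self]
    _ = s (nonemptyStage ρ + 1) := by
        conv_lhs => rw [replay_eq, if_pos hex]
        exact (Classical.epsilon_spec hex).2

noncomputable def forcingMove (I : Set (Set K))
    (τ : Set K → (Ordinal.{u} → Set (Set K)) → Ordinal.{u} → Set K) (W₀ : Set K → Set (Set K))
    (t : Ordinal.{u} → Set K) (σ : Ordinal.{u}) : Set K :=
  Classical.epsilon fun y => ∃ ρ, nonemptyStage ρ = σ ∧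
    Forces I (t 0) (τ (t 0)) (replay I τ W₀ t) ρ y

lemma forcingMove_forces {t : Ordinal.{u} → Set K} {ρ : Ordinal.{u}}
    (h : ∃ y, Forces I (t 0) (τ (t 0)) (replay I τ W₀ t) ρ y) :
    Forces I (t 0) (τ (t 0)) (replay I τ W₀ t) ρ (forcingMove I τ W₀ t (nonemptyStage ρ)) := by
  obtain ⟨y, hy⟩ := h
  have h' : ∃ y ρ', nonemptyStage ρ' = nonemptyStage ρ ∧
      Forces I (t 0) (τ (t 0)) (replay I τ W₀ t) ρ' y := ⟨y, ρ, rfl, hy⟩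
  obtain ⟨ρ', hρ', hF⟩ := Classical.epsilon_spec h'
  rwa [nonemptyStage_strictMono.injective hρ'] at hF

theorem forces_of_follows (hmono : ∀ A ∈ I, ∀ B, B ⊆ A → B ∈ I)
    (hunion : ∀ A ∈ I, ∀ B ∈ I, A ∪ B ∈ I) (hempty : (∅ : Set K) ∈ I) (hγ : IsSuccLimit γ)
    (hτ : ∀ X, X ∉ I → IsWinningChoose I X γ (τ X)) (hW₀ : ∀ X, IPartition I X (W₀ X))
    (hX : s 0 ∉ I)
    (hfollow : ∀ σ < γ, ¬ emptyTurn σ → s σ = forcingMove I τ W₀ (truncate s σ) σ) :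
    ∀ ρ < γ, Forces I (s 0) (τ (s 0)) (replay I τ W₀ s) ρ (s (nonemptyStage ρ)) := by
  intro ρ hρ
  have ht0 : truncate s (nonemptyStage ρ) 0 = s 0 := truncate_of_lt (nonemptyStage_pos ρ)
  have hF := forcingMove_forces (exists_forces hmono hunion hempty hγ (hτ _ (ht0 ▸ hX))
    (fun β _ => replay_isPartition (τ := τ) (hW₀ _) β) hρ)
  rw [ht0] at hF
  rw [hfollow _ (nonemptyStage_lt hγ hρ) (not_emptyTurn_nonemptyStage ρ)]
  exact hF.congr (hτ _ hX).1
    (replay_congr ht0 fun β hβ => truncate_of_lt (nonemptyStage_add_one_lt_iff.2 hβ))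

lemma apply_replay_of_forces (hτ : IsCoherent (τ (s 0))) {ρ : Ordinal.{u}}
    (hF : Forces I (s 0) (τ (s 0)) (replay I τ W₀ s) ρ (s (nonemptyStage ρ)))
    (hlegal : s (nonemptyStage ρ + 1) ∉ I ∧
      ∀ β < nonemptyStage ρ + 1, s (nonemptyStage ρ + 1) ⊆ s β) :
    τ (s 0) (replay I τ W₀ s) ρ = s (nonemptyStage ρ + 1) :=
  apply_replay hτ (hF.2.2 _ (hlegal.2 _ (lt_add_one _)) hlegal.1)

theorem bmValid_of_follows (hmono : ∀ A ∈ I, ∀ B, B ⊆ A → B ∈ I)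
    (hunion : ∀ A ∈ I, ∀ B ∈ I, A ∪ B ∈ I) (hempty : (∅ : Set K) ∈ I) (hγ : IsSuccLimit γ)
    (hτ : ∀ X, X ∉ I → IsWinningChoose I X γ (τ X)) (hW₀ : ∀ X, IPartition I X (W₀ X))
    (hX : s 0 ∉ I)
    (hfollow : ∀ σ < γ, ¬ emptyTurn σ → s σ = forcingMove I τ W₀ (truncate s σ) σ)
    (hEmpty : ∀ σ < γ, emptyTurn σ → BMValid I s σ → BMLegal I s σ (s σ)) :
    BMValid I s γ := by
  intro σ
  induction σ using WellFoundedLT.induction with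
  | _ σ ih =>
    intro hσγ
    have hvalid : BMValid I s σ := fun β hβ => ih β hβ (hβ.trans hσγ)
    by_cases hσ : emptyTurn σ
    · exact hEmpty σ hσγ hσ hvalid
    obtain ⟨ρ, rfl⟩ := not_emptyTurn_iff.1 hσ
    have hF := forces_of_follows hmono hunion hempty hγ hτ hW₀ hX hfollow
    obtain ⟨hpos, hsub, -⟩ := hF ρ ((le_nonemptyStage ρ).trans_lt hσγ)
    refine ⟨hpos, fun β hβ t ht => mem_of_mem_answers hvalid hσ (hsub ht).1 (fun ρ' hlt => ?_) hβ⟩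
    have hρ' := nonemptyStage_add_one_lt_iff.1 hlt
    rw [← apply_replay_of_forces (hτ _ hX).1 (hF ρ' ((hρ'.trans_le (le_nonemptyStage ρ)).trans hσγ))
      (ih _ hlt (hlt.trans hσγ))]
    exact mem_iInter₂.1 (hsub ht).2 ρ' hρ'

theorem nonemptyWinsBM_of_forall_chooseWinsLeq (hmono : ∀ A ∈ I, ∀ B, B ⊆ A → B ∈ I)
    (hunion : ∀ A ∈ I, ∀ B ∈ I, A ∪ B ∈ I) (hempty : (∅ : Set K) ∈ I) (hγ : IsSuccLimit γ)
    (h : ∀ X, X ∉ I → ChooseWinsLeq I X γ) : NonemptyWinsBM I γ := by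
  choose! τ hτ using fun X hX => chooseWinsLeq_iff.1 (h X hX)
  choose W₀ hW₀ using fun X => exists_IPartition (X := X) hmono
  refine ⟨fun s σ => forcingMove I τ W₀ (truncate s σ) σ,
    fun s s' σ h => congrArg (forcingMove I τ W₀ · σ) (truncate_congr h),
    fun s hfollow hEmpty => ?_⟩
  have hX : s 0 ∉ I := (hEmpty 0 hγ.bot_lt emptyTurn_zero fun _ hβ => (not_lt_zero hβ).elim).1
  have hvalid := bmValid_of_follows hmono hunion hempty hγ hτ hW₀ hX hfollow hEmpty
  have hF := forces_of_follows hmono hunion hempty hγ hτ hW₀ hX hfollow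
  obtain ⟨pt, hpt⟩ := ((hτ _ hX).2 _ fun ρ _ => replay_isPartition (hW₀ _) ρ).2.2
  have hanswers : ∀ ρ < γ, pt ∈ s (nonemptyStage ρ + 1) := fun ρ hρ => by
    rw [← apply_replay_of_forces (hτ _ hX).1 (hF ρ hρ) (hvalid _ (nonemptyStage_add_one_lt hγ hρ))]
    exact mem_iInter₂.1 hpt ρ hρ
  have h0 : pt ∈ s 0 :=
    (hvalid _ (nonemptyStage_add_one_lt hγ hγ.bot_lt)).2 0 (by simp) (hanswers 0 hγ.bot_lt)
  refine ⟨fun σ hσ _ _ => hvalid σ hσ, hvalid, pt, mem_iInter₂.2 fun β hβ => ?_⟩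
  refine mem_of_mem_answers hvalid (not_emptyTurn_iff.2 ⟨γ, nonemptyStage_of_isSuccLimit hγ⟩) h0
    (fun ρ hρ => hanswers ρ ?_) hβ
  exact (le_nonemptyStage ρ).trans_lt ((lt_add_one _).trans hρ)

end Backward

end BanachMazur

theorem stmt19_general {K : Type u}
    (I : Set (Set K))
    (hmono : ∀ A ∈ I, ∀ B, B ⊆ A → B ∈ I)
    (hunion : ∀ A ∈ I, ∀ B ∈ I, A ∪ B ∈ I)
    (hempty : (∅ : Set K) ∈ I)
    (γ : Ordinal.{u}) (hγ : Order.IsSuccLimit γ) :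
    NonemptyWinsBM I γ ↔ ∀ X : Set K, X ∉ I → ChooseWinsLeq I X γ :=
  ⟨fun h _ hX => BanachMazur.chooseWinsLeq_of_nonemptyWinsBM hmono hγ h hX,
    BanachMazur.nonemptyWinsBM_of_forall_chooseWinsLeq hmono hunion hempty hγ⟩

/-- Let `κ` be regular uncountable, `I` an ideal on `κ`, and `γ < κ` a limit ordinal.
Then Nonempty has a winning strategy in the Banach–Mazur game `ℬ(I,γ)` if and only if
Choose has a winning strategy in the game `𝒢_∞(X, I, ≤γ)` for every `I`-positive `X`. -/
theorem stmt19 {K : Type u} (hreg : (#K).IsRegular) (hunc : ℵ₀ < #K)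
    (I : Set (Set K))
    (hmono : ∀ A ∈ I, ∀ B, B ⊆ A → B ∈ I)
    (hunion : ∀ A ∈ I, ∀ B ∈ I, A ∪ B ∈ I)
    (hempty : (∅ : Set K) ∈ I) (hproper : (Set.univ : Set K) ∉ I)
    (γ : Ordinal.{u}) (hγ : Order.IsSuccLimit γ) (hγκ : γ < (#K).ord) :
    NonemptyWinsBM I γ ↔ ∀ X : Set K, X ∉ I → ChooseWinsLeq I X γ :=
  stmt19_general I hmono hunion hempty γ hγ
end
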